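/- arXiv:1711.03049 — 14 statements merged into one kernel-verified Lean document; each statement's English description precedes it below -/
import Mathlib

section
/- Let I ⊆ ℝ be an open interval and q = (x, y) : I → ℝ² ∖ {0} a twice-differentiable solution of Newton's system q'' = −q/‖q‖³. Then the eccentricity vector function t ↦ E(t) = (x/r − ẏ·C, y/r + ẋ·C), where r = √(x² + y²) and C = x·ẏ − y·ẋ, is constant on I. -/
private lemma key_deriv
    (I : Set ℝ) (x y : ℝ → ℝ)
    (hx : ∀ t ∈ I, DifferentiableAt ℝ x t ∧ DifferentiableAt ℝ (deriv x) t)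
    (hy : ∀ t ∈ I, DifferentiableAt ℝ y t ∧ DifferentiableAt ℝ (deriv y) t)
    (hne : ∀ t ∈ I, (x t, y t) ≠ (0, 0))
    (hnx : ∀ t ∈ I, deriv (deriv x) t = - x t / (Real.sqrt (x t ^ 2 + y t ^ 2)) ^ 3)
    (hny : ∀ t ∈ I, deriv (deriv y) t = - y t / (Real.sqrt (x t ^ 2 + y t ^ 2)) ^ 3)
    (t : ℝ) (ht : t ∈ I) :
    HasDerivAt (fun t => x t / Real.sqrt (x t ^ 2 + y t ^ 2) -
        deriv y t * (x t * deriv y t - y t * deriv x t)) 0 t ∧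
    HasDerivAt (fun t => y t / Real.sqrt (x t ^ 2 + y t ^ 2) +
        deriv x t * (x t * deriv y t - y t * deriv x t)) 0 t := by
  obtain ⟨hX, hX'⟩ := hx t ht
  obtain ⟨hY, hY'⟩ := hy t ht
  set a := x t with ha
  set b := y t with hb
  set a' := deriv x t with ha'
  set b' := deriv y t with hb'
  have hs2 : (0:ℝ) < a ^ 2 + b ^ 2 := by
    rcases eq_or_ne a 0 with h1 | h1
    · have h2 : b ≠ 0 := fun h2 => (hne t ht) (by rw [← ha, ← hb, h1, h2])
      positivity
    · positivity
  set r := Real.sqrt (a ^ 2 + b ^ 2) with hr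
  have hrpos : 0 < r := Real.sqrt_pos.2 hs2
  have hrsq : r ^ 2 = a ^ 2 + b ^ 2 := Real.sq_sqrt hs2.le
  have hXd : HasDerivAt x a' t := hX.hasDerivAt
  have hYd : HasDerivAt y b' t := hY.hasDerivAt
  have hX'd : HasDerivAt (deriv x) (-a / r ^ 3) t := hnx t ht ▸ hX'.hasDerivAt
  have hY'd : HasDerivAt (deriv y) (-b / r ^ 3) t := hny t ht ▸ hY'.hasDerivAt
  have hsum : HasDerivAt (fun t => x t ^ 2 + y t ^ 2)
      (2 * a ^ 1 * a' + 2 * b ^ 1 * b') t := by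
    exact ((hXd.pow 2).add (hYd.pow 2)).congr_deriv (by norm_num [ha, hb])
  have hsqrt : HasDerivAt (fun t => Real.sqrt (x t ^ 2 + y t ^ 2))
      (1 / (2 * r) * (2 * a ^ 1 * a' + 2 * b ^ 1 * b')) t :=
    (Real.hasDerivAt_sqrt hs2.ne').comp t hsum
  have hCross : HasDerivAt (fun t => x t * deriv y t - y t * deriv x t)
      ((a' * b' + a * (-b / r ^ 3)) - (b' * a' + b * (-a / r ^ 3))) t :=
    (hXd.mul hY'd).sub (hYd.mul hX'd)
  have hr3 : r ^ 3 ≠ 0 := pow_ne_zero _ hrpos.ne'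
  constructor
  · have h1 : HasDerivAt (fun t => x t / Real.sqrt (x t ^ 2 + y t ^ 2) -
        deriv y t * (x t * deriv y t - y t * deriv x t))
        ((a' * r - a * (1 / (2 * r) * (2 * a ^ 1 * a' + 2 * b ^ 1 * b'))) / r ^ 2 -
          ((-b / r ^ 3) * (a * b' - b * a') +
            b' * ((a' * b' + a * (-b / r ^ 3)) - (b' * a' + b * (-a / r ^ 3))))) t :=
      (hXd.div hsqrt hrpos.ne').sub (hY'd.mul hCross)
    refine h1.congr_deriv ?_
    field_simp
    linear_combination a' * hrsq
  · have h1 : HasDerivAt (fun t => y t / Real.sqrt (x t ^ 2 + y t ^ 2) +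
        deriv x t * (x t * deriv y t - y t * deriv x t))
        ((b' * r - b * (1 / (2 * r) * (2 * a ^ 1 * a' + 2 * b ^ 1 * b'))) / r ^ 2 +
          ((-a / r ^ 3) * (a * b' - b * a') +
            a' * ((a' * b' + a * (-b / r ^ 3)) - (b' * a' + b * (-a / r ^ 3))))) t :=
      (hYd.div hsqrt hrpos.ne').add (hX'd.mul hCross)
    refine h1.congr_deriv ?_
    field_simp
    linear_combination b' * hrsq

/-- For a twice-differentiable solution `q = (x, y)` of Newton's system
`q'' = −q/‖q‖³` on an open interval `I`, avoiding the origin, the eccentricity vector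
`E = (x/r − ẏ·C, y/r + ẋ·C)`, where `r = √(x² + y²)` and `C = x·ẏ − y·ẋ`,
is constant on `I`. -/
theorem eccentricity_vector_constant
    (I : Set ℝ) (hI : IsOpen I) (hI' : I.OrdConnected)
    (x y : ℝ → ℝ)
    (hx : ∀ t ∈ I, DifferentiableAt ℝ x t ∧ DifferentiableAt ℝ (deriv x) t)
    (hy : ∀ t ∈ I, DifferentiableAt ℝ y t ∧ DifferentiableAt ℝ (deriv y) t)
    (hne : ∀ t ∈ I, (x t, y t) ≠ (0, 0))
    (hnx : ∀ t ∈ I, deriv (deriv x) t = - x t / (Real.sqrt (x t ^ 2 + y t ^ 2)) ^ 3)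
    (hny : ∀ t ∈ I, deriv (deriv y) t = - y t / (Real.sqrt (x t ^ 2 + y t ^ 2)) ^ 3) :
    ∀ t₁ ∈ I, ∀ t₂ ∈ I,
      (x t₁ / Real.sqrt (x t₁ ^ 2 + y t₁ ^ 2) -
          deriv y t₁ * (x t₁ * deriv y t₁ - y t₁ * deriv x t₁),
        y t₁ / Real.sqrt (x t₁ ^ 2 + y t₁ ^ 2) +
          deriv x t₁ * (x t₁ * deriv y t₁ - y t₁ * deriv x t₁)) =
      (x t₂ / Real.sqrt (x t₂ ^ 2 + y t₂ ^ 2) -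
          deriv y t₂ * (x t₂ * deriv y t₂ - y t₂ * deriv x t₂),
        y t₂ / Real.sqrt (x t₂ ^ 2 + y t₂ ^ 2) +
          deriv x t₂ * (x t₂ * deriv y t₂ - y t₂ * deriv x t₂)) := by
  intro t₁ ht₁ t₂ ht₂
  have hconv : Convex ℝ I := convex_iff_ordConnected.2 hI'
  have key := key_deriv I x y hx hy hne hnx hny
  have const : ∀ (f : ℝ → ℝ), (∀ t ∈ I, HasDerivAt f 0 t) → f t₁ = f t₂ := by
    intro f hf
    refine hconv.is_const_of_fderivWithin_eq_zero (𝕜 := ℝ)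
      (fun t ht => ((hf t ht).differentiableAt).differentiableWithinAt)
      (fun t ht => ?_) ht₁ ht₂
    rw [fderivWithin_of_isOpen hI ht, (hf t ht).hasFDerivAt.fderiv]
    ext
    simp
  exact Prod.ext
    (const _ (fun t ht => (key t ht).1))
    (const _ (fun t ht => (key t ht).2))
end

section
/- Let I ⊆ ℝ be an open interval, q = (x, y) : I → ℝ² ∖ {0} a twice-differentiable solution of Newton's system q'' = −q/‖q‖³, let C be the constant value of the angular momentum, (α, β) the constant value of the eccentricity vector, and set γ = C². Then the unifocal equation holds along the solution: for every t ∈ I, √(x(t)² + y(t)²) = α·x(t) + β·y(t) + γ. -/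
/-- For a twice-differentiable solution `q = (x, y)` of Newton's system
`q'' = −q/‖q‖³` on an open interval `I`, if `C` is the constant angular momentum and
`(α, β)` the constant eccentricity vector, then with `γ = C²` the unifocal equation
`√(x² + y²) = α·x + β·y + γ` holds along the solution. -/
theorem unifocal_equation
    (I : Set ℝ) (hI : IsOpen I) (hI' : I.OrdConnected)
    (x y : ℝ → ℝ)
    (hx : ∀ t ∈ I, DifferentiableAt ℝ x t ∧ DifferentiableAt ℝ (deriv x) t)
    (hy : ∀ t ∈ I, DifferentiableAt ℝ y t ∧ DifferentiableAt ℝ (deriv y) t)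
    (hne : ∀ t ∈ I, (x t, y t) ≠ (0, 0))
    (hnx : ∀ t ∈ I, deriv (deriv x) t = - x t / (Real.sqrt (x t ^ 2 + y t ^ 2)) ^ 3)
    (hny : ∀ t ∈ I, deriv (deriv y) t = - y t / (Real.sqrt (x t ^ 2 + y t ^ 2)) ^ 3)
    (C : ℝ) (hC : ∀ t ∈ I, x t * deriv y t - y t * deriv x t = C)
    (α β : ℝ)
    (hα : ∀ t ∈ I, x t / Real.sqrt (x t ^ 2 + y t ^ 2) - deriv y t * C = α)
    (hβ : ∀ t ∈ I, y t / Real.sqrt (x t ^ 2 + y t ^ 2) + deriv x t * C = β) :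
    ∀ t ∈ I, Real.sqrt (x t ^ 2 + y t ^ 2) = α * x t + β * y t + C ^ 2 := by
  intro t ht
  have hne' := hne t ht
  have hr : 0 < Real.sqrt (x t ^ 2 + y t ^ 2) := by
    apply Real.sqrt_pos.mpr
    rcases (not_and_or.mp (fun h => hne' (Prod.ext h.1 h.2))) with h | h <;> positivity
  rw [← hα t ht, ← hβ t ht, ← hC t ht]
  have hsq : Real.sqrt (x t ^ 2 + y t ^ 2) ^ 2 = x t ^ 2 + y t ^ 2 :=
    Real.sq_sqrt (by positivity)
  field_simp
  nlinarith [hsq]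
end

section
/- Let I ⊆ ℝ be an open interval, q = (x, y) : I → ℝ² ∖ {0} a twice-differentiable solution of Newton's system q'' = −q/‖q‖³, let C be the constant angular momentum, (α, β) the constant eccentricity vector, and H the constant energy. Then α² + β² − 1 = 2·H·C², i.e. the squared eccentricity minus one equals twice the energy times the semiparameter γ = C². -/
/-- For a twice-differentiable solution `q = (x, y)` of Newton's system
`q'' = −q/‖q‖³` on a nonempty open interval `I`, with constant angular momentum `C`,
constant eccentricity vector `(α, β)`, and constant energy `H`, one has
`α² + β² − 1 = 2·H·C²`. -/
theorem eccentricity_energy_relation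
    (I : Set ℝ) (hI : IsOpen I) (hI' : I.OrdConnected) (hIne : I.Nonempty)
    (x y : ℝ → ℝ)
    (hx : ∀ t ∈ I, DifferentiableAt ℝ x t ∧ DifferentiableAt ℝ (deriv x) t)
    (hy : ∀ t ∈ I, DifferentiableAt ℝ y t ∧ DifferentiableAt ℝ (deriv y) t)
    (hne : ∀ t ∈ I, (x t, y t) ≠ (0, 0))
    (hnx : ∀ t ∈ I, deriv (deriv x) t = - x t / (Real.sqrt (x t ^ 2 + y t ^ 2)) ^ 3)
    (hny : ∀ t ∈ I, deriv (deriv y) t = - y t / (Real.sqrt (x t ^ 2 + y t ^ 2)) ^ 3)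
    (C : ℝ) (hC : ∀ t ∈ I, x t * deriv y t - y t * deriv x t = C)
    (α β : ℝ)
    (hα : ∀ t ∈ I, x t / Real.sqrt (x t ^ 2 + y t ^ 2) - deriv y t * C = α)
    (hβ : ∀ t ∈ I, y t / Real.sqrt (x t ^ 2 + y t ^ 2) + deriv x t * C = β)
    (H : ℝ)
    (hH : ∀ t ∈ I, (1 / 2) * (deriv x t ^ 2 + deriv y t ^ 2)
        - 1 / Real.sqrt (x t ^ 2 + y t ^ 2) = H) :
    α ^ 2 + β ^ 2 - 1 = 2 * H * C ^ 2 := by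
  obtain ⟨t, ht⟩ := hIne
  have hr2 : x t ^ 2 + y t ^ 2 > 0 := by
    rcases hne t ht with h
    by_contra hle
    push_neg at hle
    have hx0 : x t = 0 := by nlinarith [sq_nonneg (x t), sq_nonneg (y t)]
    have hy0 : y t = 0 := by nlinarith [sq_nonneg (x t), sq_nonneg (y t)]
    exact h (by simp [hx0, hy0])
  set r := Real.sqrt (x t ^ 2 + y t ^ 2) with hrdef
  have hr : r > 0 := Real.sqrt_pos.mpr hr2
  have hrsq : r ^ 2 = x t ^ 2 + y t ^ 2 := Real.sq_sqrt hr2.le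
  have h1 := hα t ht
  have h2 := hβ t ht
  have h3 := hC t ht
  have h4 := hH t ht
  rw [← hrdef] at h1 h2 h4
  have : α ^ 2 + β ^ 2 = (x t ^ 2 + y t ^ 2) / r ^ 2 + C ^ 2 * (deriv x t ^ 2 + deriv y t ^ 2) - 2 * C ^ 2 / r := by
    rw [← h1, ← h2, ← h3]
    field_simp
    ring
  rw [← hrsq] at this
  rw [div_self (by positivity : r ^ 2 ≠ 0)] at this
  have h5 : deriv x t ^ 2 + deriv y t ^ 2 = 2 * (H + 1 / r) := by
    field_simp at h4 ⊢; linarith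
  rw [h5] at this
  field_simp at this
  nlinarith [this]
end

section
/- Let I ⊆ ℝ be an open interval and q : I → ℝ² ∖ {0} a twice-differentiable solution of Newton's system q'' = −q/‖q‖³ whose angular momentum C is nonzero (a nonrectilinear solution). If t₁, t₂ ∈ I and q(t₂) = λ·q(t₁) for some real λ > 0 (i.e. the two positions lie on the same ray from the origin), then q(t₂) = q(t₁). -/
/-- For a twice-differentiable solution `q = (x, y)` of Newton's system
`q'' = −q/‖q‖³` on an open interval `I`, avoiding the origin, with nonzero (constant)
angular momentum, if two positions `q(t₁)` and `q(t₂)` lie on the same ray from the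
origin (`q(t₂) = λ·q(t₁)` with `λ > 0`), then `q(t₂) = q(t₁)`. -/
theorem nonrectilinear_same_ray_same_point
    (I : Set ℝ) (hI : IsOpen I) (hI' : I.OrdConnected)
    (x y : ℝ → ℝ)
    (hx : ∀ t ∈ I, DifferentiableAt ℝ x t ∧ DifferentiableAt ℝ (deriv x) t)
    (hy : ∀ t ∈ I, DifferentiableAt ℝ y t ∧ DifferentiableAt ℝ (deriv y) t)
    (hne : ∀ t ∈ I, (x t, y t) ≠ (0, 0))
    (hnx : ∀ t ∈ I, deriv (deriv x) t = - x t / (Real.sqrt (x t ^ 2 + y t ^ 2)) ^ 3)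
    (hny : ∀ t ∈ I, deriv (deriv y) t = - y t / (Real.sqrt (x t ^ 2 + y t ^ 2)) ^ 3)
    (C : ℝ) (hC0 : C ≠ 0)
    (hC : ∀ t ∈ I, x t * deriv y t - y t * deriv x t = C)
    (t₁ t₂ : ℝ) (ht₁ : t₁ ∈ I) (ht₂ : t₂ ∈ I)
    (lam : ℝ) (hlam : 0 < lam)
    (hray : x t₂ = lam * x t₁ ∧ y t₂ = lam * y t₁) :
    x t₂ = x t₁ ∧ y t₂ = y t₁ := by
  -- setup
  set r : ℝ → ℝ := fun t => Real.sqrt (x t ^ 2 + y t ^ 2) with hr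
  have hpos : ∀ t ∈ I, 0 < x t ^ 2 + y t ^ 2 := by
    intro t ht
    rcases (hne t ht) with h
    have : x t ≠ 0 ∨ y t ≠ 0 := by
      by_contra hcon
      push_neg at hcon
      exact h (by simp [hcon.1, hcon.2])
    rcases this with h' | h' <;> positivity
  have hrpos : ∀ t ∈ I, 0 < r t := fun t ht => Real.sqrt_pos.2 (hpos t ht)
  have hrsq : ∀ t ∈ I, r t ^ 2 = x t ^ 2 + y t ^ 2 := fun t ht =>
    Real.sq_sqrt (hpos t ht).le
  -- derivative of r
  have hderr : ∀ t ∈ I, HasDerivAt r ((x t * deriv x t + y t * deriv y t) / r t) t := by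
    intro t ht
    have hx1 := (hx t ht).1
    have hy1 := (hy t ht).1
    have hin : HasDerivAt (fun s => x s ^ 2 + y s ^ 2)
        (2 * x t * deriv x t + 2 * y t * deriv y t) t := by
      have := ((hx1.hasDerivAt.pow 2).add (hy1.hasDerivAt.pow 2))
      refine this.congr_deriv (Eq.symm ?_)
      ring
    have := (Real.hasDerivAt_sqrt (hpos t ht).ne').comp t hin
    refine this.congr_deriv (Eq.symm ?_)
    rw [hr]
    field_simp
  -- LRL components
  set f : ℝ → ℝ := fun t => C * deriv y t - x t / r t with hf
  set g : ℝ → ℝ := fun t => -C * deriv x t - y t / r t with hg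
  have hfd : ∀ t ∈ I, HasDerivAt f 0 t := by
    intro t ht
    have h1 : HasDerivAt (fun s => C * deriv y s) (C * deriv (deriv y) t) t :=
      ((hy t ht).2.hasDerivAt).const_mul C
    have h2 : HasDerivAt (fun s => x s / r s)
        ((deriv x t * r t - x t * ((x t * deriv x t + y t * deriv y t) / r t)) / r t ^ 2) t :=
      ((hx t ht).1.hasDerivAt).div (hderr t ht) (hrpos t ht).ne'
    have := h1.sub h2
    refine this.congr_deriv (Eq.symm ?_)
    rw [hny t ht]
    have hrne := (hrpos t ht).ne'
    have hr2 : r t ^ 2 = x t ^ 2 + y t ^ 2 := hrsq t ht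
    have hCt := hC t ht
    have hrr : Real.sqrt (x t ^ 2 + y t ^ 2) = r t := rfl
    rw [hrr]
    field_simp
    ring_nf
    linear_combination (-(y t)) * hCt + (deriv x t) * hr2
  have hgd : ∀ t ∈ I, HasDerivAt g 0 t := by
    intro t ht
    have h1 : HasDerivAt (fun s => -C * deriv x s) (-C * deriv (deriv x) t) t :=
      ((hx t ht).2.hasDerivAt).const_mul (-C)
    have h2 : HasDerivAt (fun s => y s / r s)
        ((deriv y t * r t - y t * ((x t * deriv x t + y t * deriv y t) / r t)) / r t ^ 2) t :=
      ((hy t ht).1.hasDerivAt).div (hderr t ht) (hrpos t ht).ne'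
    have := h1.sub h2
    refine this.congr_deriv (Eq.symm ?_)
    rw [hnx t ht]
    have hrne := (hrpos t ht).ne'
    have hr2 : r t ^ 2 = x t ^ 2 + y t ^ 2 := hrsq t ht
    have hCt := hC t ht
    have hrr : Real.sqrt (x t ^ 2 + y t ^ 2) = r t := rfl
    rw [hrr]
    field_simp
    ring_nf
    linear_combination (x t) * hCt + (deriv y t) * hr2
  -- constancy
  have hconv : Convex ℝ I := convex_iff_ordConnected.2 hI'
  have const : ∀ (F : ℝ → ℝ), (∀ t ∈ I, HasDerivAt F 0 t) → F t₂ = F t₁ := by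
    intro F hF
    refine hconv.is_const_of_fderivWithin_eq_zero (𝕜 := ℝ)
      (fun t ht => ((hF t ht).differentiableAt).differentiableWithinAt) ?_ ht₂ ht₁
    intro t ht
    rw [fderivWithin_of_isOpen hI ht]
    have := (hF t ht).hasFDerivAt
    rw [this.fderiv]
    ext
    simp
  have hf12 : f t₂ = f t₁ := const f hfd
  have hg12 : g t₂ = g t₁ := const g hgd
  -- energy-type identity: x t * f t + y t * g t = C^2 - r t
  have key : ∀ t ∈ I, x t * f t + y t * g t = C ^ 2 - r t := by
    intro t ht
    have hrne := (hrpos t ht).ne'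
    have hr2 := hrsq t ht
    have hCt := hC t ht
    rw [hf, hg]
    field_simp
    linear_combination (C * r t) * hCt + hr2
  have k1 := key t₁ ht₁
  have k2 := key t₂ ht₂
  -- r t₂ = lam * r t₁
  have hr12 : r t₂ = lam * r t₁ := by
    rw [hr]
    simp only [hray.1, hray.2]
    rw [show (lam * x t₁) ^ 2 + (lam * y t₁) ^ 2 = lam ^ 2 * (x t₁ ^ 2 + y t₁ ^ 2) by ring,
      Real.sqrt_mul (by positivity), Real.sqrt_sq hlam.le]
  have hx2 : x t₂ * f t₂ + y t₂ * g t₂ = lam * (x t₁ * f t₁ + y t₁ * g t₁) := by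
    rw [hray.1, hray.2, hf12, hg12]; ring
  have hlam1 : lam = 1 := by
    rw [k1, k2, hr12] at hx2
    have : C ^ 2 * (1 - lam) = 0 := by linarith
    rcases mul_eq_zero.1 this with h | h
    · exact absurd (pow_eq_zero_iff (by norm_num) |>.1 h) hC0
    · linarith
  rw [hray.1, hray.2, hlam1]
  constructor <;> ring
end

section
/- Let (α, β) ∈ ℝ², γ > 0, and let (x, y) ∈ ℝ² satisfy r = α·x + β·y + γ, where r = √(x² + y²) (so in particular (x, y) ≠ (0,0)). Then there exists a velocity (u, v) ∈ ℝ² such that simultaneously x·v − y·u = √γ, x/r − v·√γ = α, and y/r + u·√γ = β. In other words, the three conditions 'angular momentum equals √γ' and 'eccentricity vector equals (α, β)' are consistent at any point of the Keplerian branch with parameters (α, β, γ). -/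
/-- At any point `(x, y)` of the Keplerian branch with unifocal parameters
`(α, β, γ)`, `γ > 0`, there is a velocity `(u, v)` realizing simultaneously the angular
momentum `√γ` and the eccentricity vector `(α, β)`. -/
theorem velocity_exists_on_branch
    (α β γ x y : ℝ) (hγ : 0 < γ)
    (h : Real.sqrt (x ^ 2 + y ^ 2) = α * x + β * y + γ) :
    ∃ u v : ℝ,
      x * v - y * u = Real.sqrt γ ∧
      x / Real.sqrt (x ^ 2 + y ^ 2) - v * Real.sqrt γ = α ∧
      y / Real.sqrt (x ^ 2 + y ^ 2) + u * Real.sqrt γ = β := by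
  set r := Real.sqrt (x ^ 2 + y ^ 2) with hr
  have hrne : r ≠ 0 := by
    intro h0
    have hx : x ^ 2 + y ^ 2 = 0 := by
      have := Real.sqrt_eq_zero'.mp h0
      nlinarith [sq_nonneg x, sq_nonneg y]
    have hx0 : x = 0 := by nlinarith [sq_nonneg x, sq_nonneg y]
    have hy0 : y = 0 := by nlinarith [sq_nonneg x, sq_nonneg y]
    rw [h0] at h
    rw [hx0, hy0] at h
    simp at h
    linarith
  have hs : Real.sqrt γ ≠ 0 := by positivity
  have hsq : Real.sqrt γ * Real.sqrt γ = γ := Real.mul_self_sqrt hγ.le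
  refine ⟨(β - y / r) / Real.sqrt γ, (x / r - α) / Real.sqrt γ, ?_, ?_, ?_⟩
  · have hr2 : r * r = x ^ 2 + y ^ 2 := Real.mul_self_sqrt (by positivity)
    field_simp
    linear_combination -hr2 + r*h - r*hsq
  · field_simp
    ring
  · field_simp
    ring
end

section
/- Let A ∈ ℝ² ∖ {0}, let s > 0, and set B = −s·A, so that the origin O lies in the open segment from A to B. If α, β, γ ∈ ℝ satisfy the two unifocal equations ‖A‖ = α·A₁ + β·A₂ + γ and ‖B‖ = α·B₁ + β·B₂ + γ, then γ = 2·‖A‖·‖B‖/(‖A‖ + ‖B‖). In particular all Keplerian branches passing through both A and B have the same semiparameter γ. -/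
/-- If `A ≠ 0`, `s > 0` and `B = −s·A` (so the origin lies in the open
segment from `A` to `B`), then any unifocal parameters `(α, β, γ)` with
`‖A‖ = α·A₁ + β·A₂ + γ` and `‖B‖ = α·B₁ + β·B₂ + γ` satisfy
`γ = 2·‖A‖·‖B‖/(‖A‖ + ‖B‖)`: all Keplerian branches through `A` and `B` have the
same semiparameter. -/
theorem semiparameter_determined_when_origin_on_chord
    (A : ℝ × ℝ) (hA : A ≠ 0) (s : ℝ) (hs : 0 < s)
    (B : ℝ × ℝ) (hB : B = (-s) • A)
    (α β γ : ℝ)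
    (h1 : Real.sqrt (A.1 ^ 2 + A.2 ^ 2) = α * A.1 + β * A.2 + γ)
    (h2 : Real.sqrt (B.1 ^ 2 + B.2 ^ 2) = α * B.1 + β * B.2 + γ) :
    γ = 2 * Real.sqrt (A.1 ^ 2 + A.2 ^ 2) * Real.sqrt (B.1 ^ 2 + B.2 ^ 2) /
        (Real.sqrt (A.1 ^ 2 + A.2 ^ 2) + Real.sqrt (B.1 ^ 2 + B.2 ^ 2)) := by
  have hA' : A.1 ≠ 0 ∨ A.2 ≠ 0 := by
    by_contra h
    push_neg at h
    exact hA (Prod.ext h.1 h.2)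
  have hpos : 0 < A.1 ^ 2 + A.2 ^ 2 := by
    rcases hA' with h | h
    · positivity
    · positivity
  set a := Real.sqrt (A.1 ^ 2 + A.2 ^ 2) with ha
  have hapos : 0 < a := Real.sqrt_pos.mpr hpos
  have hB1 : B.1 = -s * A.1 := by rw [hB]; simp [smul_eq_mul]
  have hB2 : B.2 = -s * A.2 := by rw [hB]; simp [smul_eq_mul]
  have hBnorm : Real.sqrt (B.1 ^ 2 + B.2 ^ 2) = s * a := by
    rw [hB1, hB2, ha]
    have : (-s * A.1) ^ 2 + (-s * A.2) ^ 2 = s ^ 2 * (A.1 ^ 2 + A.2 ^ 2) := by ring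
    rw [this, Real.sqrt_mul (sq_nonneg s), Real.sqrt_sq hs.le]
  rw [hBnorm] at h2 ⊢
  rw [hB1, hB2] at h2
  have key : γ * (1 + s) = 2 * s * a := by nlinarith
  have hden : a + s * a = a * (1 + s) := by ring
  rw [hden]
  field_simp
  nlinarith
end

section
/- Let I ⊆ ℝ be an open interval, q : I → ℝ² ∖ {0} a twice-differentiable solution of Newton's system q'' = −q/‖q‖³, and let t_A, t_B ∈ I. Set A = q(t_A), B = q(t_B), v_A = q̇(t_A), v_B = q̇(t_B), and let ε_A = A/‖A‖, ε_B = B/‖B‖ be the radial unit vectors. Then the vectors v_B − v_A and ε_A + ε_B are linearly dependent. -/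
private lemma key_alg (exA eyA exB eyB vxA vyA vxB vyB L0 rA rB : ℝ)
    (e1 : L0 * (vxB - vxA) = eyA - eyB)
    (e2 : L0 * (vyB - vyA) = exB - exA)
    (e3 : exA ^ 2 + eyA ^ 2 = 1) (e4 : exB ^ 2 + eyB ^ 2 = 1)
    (cA : vxA * eyA - vyA * exA = -L0 / rA)
    (cB : vxB * eyB - vyB * exB = -L0 / rB) :
    ∃ c d : ℝ, (c, d) ≠ (0, 0) ∧ c * (vxB - vxA) + d * (exA + exB) = 0 ∧
      c * (vyB - vyA) + d * (eyA + eyB) = 0 := by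
  by_cases h0 : exA + exB = 0 ∧ eyA + eyB = 0
  · exact ⟨0, 1, by simp, by simp [h0.1], by simp [h0.2]⟩
  · have hD : (vxB - vxA) * (eyA + eyB) - (vyB - vyA) * (exA + exB) = 0 := by
      rcases eq_or_ne L0 0 with hL | hL
      · rw [hL] at e1 e2 cA cB
        have ha : eyA = eyB := by
          have : (0:ℝ) = eyA - eyB := by rw [← e1]; ring
          linarith
        have hb : exA = exB := by
          have : (0:ℝ) = exB - exA := by rw [← e2]; ring
          linarith
        linear_combination 2 * cB - 2 * cA + (vxB + vxA) * ha - (vyA + vyB) * hb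
      · have key : L0 * ((vxB - vxA) * (eyA + eyB) - (vyB - vyA) * (exA + exB)) = 0 := by
          linear_combination (eyA + eyB) * e1 - (exA + exB) * e2 + e3 - e4
        exact (mul_eq_zero.mp key).resolve_left hL
    refine ⟨(exA + exB) ^ 2 + (eyA + eyB) ^ 2,
      -((vxB - vxA) * (exA + exB) + (vyB - vyA) * (eyA + eyB)), ?_,
      by linear_combination (eyA + eyB) * hD, by linear_combination (-(exA + exB)) * hD⟩
    intro hh
    rw [Prod.mk.injEq] at hh
    have h1 := hh.1
    exact h0 ⟨by nlinarith [sq_nonneg (exA + exB), sq_nonneg (eyA + eyB)],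
      by nlinarith [sq_nonneg (exA + exB), sq_nonneg (eyA + eyB)]⟩

/-- For a twice-differentiable solution `q` of Newton's system
`q'' = −q/‖q‖³` on an open interval `I`, avoiding the origin, and any two times
`t_A, t_B ∈ I`, the vectors `v_B − v_A` and `ε_A + ε_B` (with `ε = q/‖q‖`) are
linearly dependent. -/
theorem velocity_difference_bisector_dependent
    (I : Set ℝ) (hI : IsOpen I) (hI' : I.OrdConnected)
    (q : ℝ → EuclideanSpace ℝ (Fin 2))
    (hq : ∀ t ∈ I, DifferentiableAt ℝ q t ∧ DifferentiableAt ℝ (deriv q) t)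
    (hne : ∀ t ∈ I, q t ≠ 0)
    (hN : ∀ t ∈ I, deriv (deriv q) t = -((‖q t‖ ^ 3)⁻¹ • q t))
    (tA tB : ℝ) (htA : tA ∈ I) (htB : tB ∈ I) :
    ∃ c d : ℝ, (c, d) ≠ (0, 0) ∧
      c • (deriv q tB - deriv q tA) +
        d • ((‖q tA‖)⁻¹ • q tA + (‖q tB‖)⁻¹ • q tB) = 0 := by
  have hConv : Convex ℝ I := convex_iff_ordConnected.mpr hI'
  have hRpos : ∀ t ∈ I, 0 < ‖q t‖ := fun t ht => norm_pos_iff.mpr (hne t ht)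
  have hnorm : ∀ s, ‖q s‖ = Real.sqrt (q s 0 ^ 2 + q s 1 ^ 2) := by
    intro s
    rw [EuclideanSpace.norm_eq]
    simp [Fin.sum_univ_two, sq_abs]
  have hR2 : ∀ t ∈ I, ‖q t‖ ^ 2 = q t 0 ^ 2 + q t 1 ^ 2 := by
    intro t ht
    rw [hnorm t, Real.sq_sqrt (by positivity)]
  have hX' : ∀ t ∈ I, HasDerivAt (fun s => q s 0) (deriv q t 0) t := by
    intro t ht
    have h := (EuclideanSpace.proj (0 : Fin 2)).hasFDerivAt.comp_hasDerivAt t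
      (hq t ht).1.hasDerivAt
    simp at h; exact h
  have hY' : ∀ t ∈ I, HasDerivAt (fun s => q s 1) (deriv q t 1) t := by
    intro t ht
    have h := (EuclideanSpace.proj (1 : Fin 2)).hasFDerivAt.comp_hasDerivAt t
      (hq t ht).1.hasDerivAt
    simp at h; exact h
  have hv' : ∀ t ∈ I, HasDerivAt (deriv q) (-((‖q t‖ ^ 3)⁻¹ • q t)) t := by
    intro t ht
    have h := (hq t ht).2.hasDerivAt
    rwa [hN t ht] at h
  have hVX' : ∀ t ∈ I, HasDerivAt (fun s => deriv q s 0) (-((‖q t‖ ^ 3)⁻¹ * q t 0)) t := by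
    intro t ht
    have h := (EuclideanSpace.proj (0 : Fin 2)).hasFDerivAt.comp_hasDerivAt t (hv' t ht)
    simp at h; exact h
  have hVY' : ∀ t ∈ I, HasDerivAt (fun s => deriv q s 1) (-((‖q t‖ ^ 3)⁻¹ * q t 1)) t := by
    intro t ht
    have h := (EuclideanSpace.proj (1 : Fin 2)).hasFDerivAt.comp_hasDerivAt t (hv' t ht)
    simp at h; exact h
  have hR' : ∀ t ∈ I, HasDerivAt (fun s => ‖q s‖)
      ((q t 0 * deriv q t 0 + q t 1 * deriv q t 1) / ‖q t‖) t := by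
    intro t ht
    have hne' : q t 0 ^ 2 + q t 1 ^ 2 ≠ 0 := by
      have := hR2 t ht; have := hRpos t ht; nlinarith
    have h := (((hX' t ht).pow 2).add ((hY' t ht).pow 2)).sqrt hne'
    simp only [funext hnorm]
    refine h.congr_deriv ?_
    simp only [Pi.add_apply, Pi.pow_apply]
    rw [← hnorm t]
    have := (hRpos t ht).ne'
    field_simp
    ring
  have hL' : ∀ t ∈ I,
      HasDerivAt (fun s => q s 0 * deriv q s 1 - q s 1 * deriv q s 0) 0 t := by
    intro t ht
    refine (((hX' t ht).mul (hVY' t ht)).sub ((hY' t ht).mul (hVX' t ht))).congr_deriv ?_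
    ring
  have hH1' : ∀ t ∈ I, HasDerivAt
      (fun s => (q s 0 * deriv q s 1 - q s 1 * deriv q s 0) * deriv q s 0 + q s 1 / ‖q s‖)
      0 t := by
    intro t ht
    have hRne := (hRpos t ht).ne'
    refine (((hL' t ht).mul (hVX' t ht)).add ((hY' t ht).div (hR' t ht) hRne)).congr_deriv ?_
    have h2 := hR2 t ht
    field_simp
    linear_combination (deriv q t 1) * h2
  have hH2' : ∀ t ∈ I, HasDerivAt
      (fun s => (q s 0 * deriv q s 1 - q s 1 * deriv q s 0) * deriv q s 1 - q s 0 / ‖q s‖)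
      0 t := by
    intro t ht
    have hRne := (hRpos t ht).ne'
    refine (((hL' t ht).mul (hVY' t ht)).sub ((hX' t ht).div (hR' t ht) hRne)).congr_deriv ?_
    have h2 := hR2 t ht
    field_simp
    linear_combination (-(deriv q t 0)) * h2
  have const : ∀ f : ℝ → ℝ, (∀ t ∈ I, HasDerivAt f 0 t) → f tA = f tB := by
    intro f h
    apply hConv.is_const_of_fderivWithin_eq_zero (f := f)
      (fun t ht => ((h t ht).differentiableAt).differentiableWithinAt) _ htA htB
    intro t ht
    rw [fderivWithin_of_isOpen hI ht, (h t ht).hasFDerivAt.fderiv]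
    ext; simp
  have hLc := const _ hL'
  have hH1c := const _ hH1'
  have hH2c := const _ hH2'
  simp only at hLc hH1c hH2c
  have hRA := hRpos tA htA
  have hRB := hRpos tB htB
  have hR2A := hR2 tA htA
  have hR2B := hR2 tB htB
  obtain ⟨c, d, hcd, hx, hy⟩ := key_alg (q tA 0 / ‖q tA‖) (q tA 1 / ‖q tA‖)
    (q tB 0 / ‖q tB‖) (q tB 1 / ‖q tB‖)
    (deriv q tA 0) (deriv q tA 1) (deriv q tB 0) (deriv q tB 1)
    (q tA 0 * deriv q tA 1 - q tA 1 * deriv q tA 0) ‖q tA‖ ‖q tB‖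
    (by linear_combination deriv q tB 0 * hLc - hH1c)
    (by linear_combination deriv q tB 1 * hLc - hH2c)
    (by field_simp; linarith [hR2A])
    (by field_simp; linarith [hR2B])
    (by ring)
    (by linear_combination (‖q tB‖)⁻¹ * hLc)
  refine ⟨c, d, hcd, ?_⟩
  ext i
  fin_cases i
  · simpa [div_eq_inv_mul, mul_comm, mul_add] using hx
  · simpa [div_eq_inv_mul, mul_comm, mul_add] using hy
end

section
/- Fix d ≥ 1. Let J ⊆ ℝ be an open interval, a, b : J → ℝ differentiable with a(s) < b(s) for all s, and q : J × ℝ → ℝ^d ∖ {0} a C² map such that for each s ∈ J the curve t ↦ q(s, t) solves Newton's system ∂²q/∂t² = −q/‖q‖³. Define A(s) = q(s, a(s)), B(s) = q(s, b(s)), v_A(s) = ∂_t q(s, a(s)), v_B(s) = ∂_t q(s, b(s)), the energy H(s) = ½‖∂_t q(s, t)‖² − 1/‖q(s, t)‖ (independent of t), and the Maupertuis action w(s) = ∫_{a(s)}^{b(s)} ‖∂_t q(s, t)‖² dt. Then for every s ∈ J, Hamilton's variational formula holds: w'(s) = ⟨B'(s), v_B(s)⟩ − ⟨A'(s), v_A(s)⟩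 + (b(s) − a(s))·H'(s), where A'(s), B'(s) denote the derivatives of the endpoint curves s ↦ A(s), s ↦ B(s). -/
open RealInnerProductSpace

private theorem hd_norm' {E : Type*} [NormedAddCommGroup E] [InnerProductSpace ℝ E]
    {c : ℝ → E} {c' : E} {x : ℝ} (hc : HasDerivAt c c' x) (h : c x ≠ 0) :
    HasDerivAt (fun y => ‖c y‖) (⟪c', c x⟫ / ‖c x‖) x := by
  have h1 : HasDerivAt (fun y => ‖c y‖ ^ 2) (2 * ⟪c x, c'⟫) x := hc.norm_sq
  have h2 : HasDerivAt (fun y => Real.sqrt (‖c y‖ ^ 2))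
      ((2 * ⟪c x, c'⟫) / (2 * Real.sqrt (‖c x‖ ^ 2))) x := by
    apply h1.sqrt; simpa using h
  have hs : ∀ y : ℝ, Real.sqrt (‖c y‖ ^ 2) = ‖c y‖ := fun y => Real.sqrt_sq (norm_nonneg _)
  have h3 : (2 * ⟪c x, c'⟫) / (2 * Real.sqrt (‖c x‖ ^ 2)) = ⟪c', c x⟫ / ‖c x‖ := by
    rw [hs x, real_inner_comm]; ring
  rw [← h3]
  exact h2.congr_of_eventuallyEq (Filter.Eventually.of_forall fun y => (hs y).symm)

private theorem hd_norm_inv' {E : Type*} [NormedAddCommGroup E] [InnerProductSpace ℝ E]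
    {c : ℝ → E} {c' : E} {x : ℝ} (hc : HasDerivAt c c' x) (h : c x ≠ 0) :
    HasDerivAt (fun y => ‖c y‖⁻¹) (-(⟪c', c x⟫ / ‖c x‖ ^ 3)) x := by
  have h1 := (hd_norm' hc h).inv (norm_ne_zero_iff.mpr h)
  have h3 : ‖c x‖ * ‖c x‖ ^ 2 = ‖c x‖ ^ 3 := by ring
  rw [neg_div, div_div, h3] at h1
  exact h1

/-- Hamilton's variational formula: For a C² one-parameter family of
Keplerian arcs `s ↦ (a(s), b(s), q(s, ·))` in `ℝ^d ∖ {0}`, with endpoints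
`A(s) = q(s, a(s))`, `B(s) = q(s, b(s))`, endpoint velocities `v_A, v_B`, energy `H(s)`
(independent of `t`) and Maupertuis action `w(s) = ∫_{a(s)}^{b(s)} ‖∂_t q(s,t)‖² dt`,
one has `w'(s) = ⟨B'(s), v_B(s)⟩ − ⟨A'(s), v_A(s)⟩ + (b(s) − a(s))·H'(s)` on `J`. -/
theorem hamilton_variational_formula
    (d : ℕ) (hd : 1 ≤ d)
    (J : Set ℝ) (hJ : IsOpen J) (hJ' : J.OrdConnected)
    (a b : ℝ → ℝ)
    (ha : ∀ s ∈ J, DifferentiableAt ℝ a s)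
    (hb : ∀ s ∈ J, DifferentiableAt ℝ b s)
    (hab : ∀ s ∈ J, a s < b s)
    (q : ℝ → ℝ → EuclideanSpace ℝ (Fin d))
    (hsm : ContDiff ℝ 2 (Function.uncurry q))
    (hne : ∀ s ∈ J, ∀ t : ℝ, q s t ≠ 0)
    (hN : ∀ s ∈ J, ∀ t : ℝ,
      deriv (deriv (q s)) t = -((‖q s t‖ ^ 3)⁻¹ • q s t))
    (H : ℝ → ℝ)
    (hH : ∀ s ∈ J, ∀ t : ℝ,
      H s = (1 / 2) * ‖deriv (q s) t‖ ^ 2 - 1 / ‖q s t‖) :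
    ∀ s ∈ J,
      deriv (fun σ => ∫ t in (a σ)..(b σ), ‖deriv (q σ) t‖ ^ 2) s =
        ⟪deriv (fun σ => q σ (b σ)) s, deriv (q s) (b s)⟫ -
        ⟪deriv (fun σ => q σ (a σ)) s, deriv (q s) (a s)⟫ +
        (b s - a s) * deriv H s := by
  intro s hs
  set F : ℝ × ℝ → EuclideanSpace ℝ (Fin d) := Function.uncurry q with hFdef
  have hF1 : ContDiff ℝ 1 F := hsm.of_le one_le_two
  have hFd : Differentiable ℝ F := hF1.differentiable one_ne_zero
  have hDf : ContDiff ℝ 1 (fderiv ℝ F) := hsm.fderiv_right (le_refl _)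
  have hDfd : Differentiable ℝ (fderiv ℝ F) := hDf.differentiable one_ne_zero
  set D1 : ℝ × ℝ → EuclideanSpace ℝ (Fin d) := fun p => fderiv ℝ F p (1, 0) with hD1def
  set D2 : ℝ × ℝ → EuclideanSpace ℝ (Fin d) := fun p => fderiv ℝ F p (0, 1) with hD2def
  have hD1c : ContDiff ℝ 1 D1 :=
    (ContinuousLinearMap.apply ℝ (EuclideanSpace ℝ (Fin d)) ((1:ℝ), (0:ℝ))).contDiff.comp hDf
  have hD2c : ContDiff ℝ 1 D2 :=
    (ContinuousLinearMap.apply ℝ (EuclideanSpace ℝ (Fin d)) ((0:ℝ), (1:ℝ))).contDiff.comp hDf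
  have hD1d : Differentiable ℝ D1 := hD1c.differentiable one_ne_zero
  have hD2d : Differentiable ℝ D2 := hD2c.differentiable one_ne_zero
  -- curves t ↦ (σ, t) and σ ↦ (σ, t)
  have hcurve_t : ∀ σ t : ℝ, HasDerivAt (fun τ : ℝ => ((σ, τ) : ℝ × ℝ)) (0, 1) t :=
    fun σ t => (hasDerivAt_const t σ).prodMk (hasDerivAt_id t)
  have hcurve_s : ∀ σ t : ℝ, HasDerivAt (fun x : ℝ => ((x, t) : ℝ × ℝ)) (1, 0) σ :=
    fun σ t => (hasDerivAt_id σ).prodMk (hasDerivAt_const σ t)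
  -- ∂_t q = D2
  have hqt : ∀ σ t : ℝ, HasDerivAt (q σ) (D2 (σ, t)) t := by
    intro σ t
    exact ((hFd (σ, t)).hasFDerivAt.comp_hasDerivAt t (hcurve_t σ t))
  have hderiv_q : ∀ σ : ℝ, deriv (q σ) = fun t => D2 (σ, t) :=
    fun σ => funext fun t => (hqt σ t).deriv
  -- t-derivative of D2 along t ↦ (σ,t)
  have hD2t : ∀ σ t : ℝ, HasDerivAt (fun τ => D2 (σ, τ)) (fderiv ℝ D2 (σ, t) (0, 1)) t :=
    fun σ t => (hD2d (σ, t)).hasFDerivAt.comp_hasDerivAt t (hcurve_t σ t)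
  -- Newton's equation in D2 form
  have hNewton : ∀ σ ∈ J, ∀ t : ℝ,
      fderiv ℝ D2 (σ, t) (0, 1) = -((‖F (σ, t)‖ ^ 3)⁻¹ • F (σ, t)) := by
    intro σ hσ t
    have h1 : deriv (deriv (q σ)) t = fderiv ℝ D2 (σ, t) (0, 1) := by
      rw [hderiv_q σ]; exact (hD2t σ t).deriv
    rw [← h1]; exact hN σ hσ t
  -- symmetry: t-derivative of D1 is fderiv D2 (1,0)
  have happ : ∀ (v : ℝ × ℝ) (p : ℝ × ℝ),
      HasFDerivAt (fun p' => fderiv ℝ F p' v)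
        ((ContinuousLinearMap.apply ℝ (EuclideanSpace ℝ (Fin d)) v).comp
          (fderiv ℝ (fderiv ℝ F) p)) p := by
    intro v p
    exact (ContinuousLinearMap.apply ℝ (EuclideanSpace ℝ (Fin d)) v).hasFDerivAt.comp p
      (hDfd p).hasFDerivAt
  have hsymm : ∀ p : ℝ × ℝ, ∀ v w : ℝ × ℝ,
      fderiv ℝ (fderiv ℝ F) p v w = fderiv ℝ (fderiv ℝ F) p w v := by
    intro p v w
    exact second_derivative_symmetric (fun y => (hFd y).hasFDerivAt) (hDfd p).hasFDerivAt v w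
  have hD1t : ∀ σ t : ℝ, HasDerivAt (fun τ => D1 (σ, τ)) (fderiv ℝ D2 (σ, t) (1, 0)) t := by
    intro σ t
    have h1 : HasDerivAt (fun τ => D1 (σ, τ)) (fderiv ℝ D1 (σ, t) (0, 1)) t :=
      (hD1d (σ, t)).hasFDerivAt.comp_hasDerivAt t (hcurve_t σ t)
    have h2 : fderiv ℝ D1 (σ, t) (0, 1) = fderiv ℝ (fderiv ℝ F) (σ, t) (0, 1) (1, 0) := by
      rw [hD1def, (happ (1, 0) (σ, t)).fderiv]; rfl
    have h3 : fderiv ℝ D2 (σ, t) (1, 0) = fderiv ℝ (fderiv ℝ F) (σ, t) (1, 0) (0, 1) := by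
      rw [hD2def, (happ (0, 1) (σ, t)).fderiv]; rfl
    rw [h3, ← hsymm (σ, t) (0, 1) (1, 0), ← h2]
    exact h1
  -- energy derivative, pointwise in t
  have hFst : ∀ t : ℝ, F (s, t) ≠ 0 := fun t => hne s hs t
  have hHs : ∀ t : ℝ, HasDerivAt H
      (⟪D2 (s, t), fderiv ℝ D2 (s, t) (1, 0)⟫ + ⟪D1 (s, t), F (s, t)⟫ / ‖F (s, t)‖ ^ 3) s := by
    intro t
    have hcF : HasDerivAt (fun σ' => F (σ', t)) (D1 (s, t)) s := by
      have := (hFd (s, t)).hasFDerivAt.comp_hasDerivAt s (hcurve_s s t); exact this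
    have hcD2 : HasDerivAt (fun σ' => D2 (σ', t)) (fderiv ℝ D2 (s, t) (1, 0)) s := by
      have := (hD2d (s, t)).hasFDerivAt.comp_hasDerivAt s (hcurve_s s t); exact this
    have h1 : HasDerivAt (fun σ' => (1 / 2 : ℝ) * ‖D2 (σ', t)‖ ^ 2)
        ((1 / 2 : ℝ) * (2 * ⟪D2 (s, t), fderiv ℝ D2 (s, t) (1, 0)⟫)) s :=
      hcD2.norm_sq.const_mul _
    have h2 : HasDerivAt (fun σ' => ‖F (σ', t)‖⁻¹)
        (-(⟪D1 (s, t), F (s, t)⟫ / ‖F (s, t)‖ ^ 3)) s := hd_norm_inv' hcF (hFst t)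
    have h3 := h1.sub h2
    have h4 : (1 / 2 : ℝ) * (2 * ⟪D2 (s, t), fderiv ℝ D2 (s, t) (1, 0)⟫) -
        -(⟪D1 (s, t), F (s, t)⟫ / ‖F (s, t)‖ ^ 3) =
        ⟪D2 (s, t), fderiv ℝ D2 (s, t) (1, 0)⟫ + ⟪D1 (s, t), F (s, t)⟫ / ‖F (s, t)‖ ^ 3 := by
      ring
    rw [h4] at h3
    apply h3.congr_of_eventuallyEq
    filter_upwards [hJ.mem_nhds hs] with σ' hσ'
    rw [hH σ' hσ' t, hderiv_q σ']; norm_num [one_div]; rfl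
  have he : ∀ t : ℝ, ⟪D2 (s, t), fderiv ℝ D2 (s, t) (1, 0)⟫ =
      deriv H s - ⟪D1 (s, t), F (s, t)⟫ / ‖F (s, t)‖ ^ 3 := by
    intro t
    have := (hHs t).deriv
    linarith
  -- restated energy identity
  have hH' : ∀ σ ∈ J, ∀ t : ℝ, H σ = 1 / 2 * ‖D2 (σ, t)‖ ^ 2 - 1 / ‖F (σ, t)‖ := by
    intro σ hσ t
    rw [hH σ hσ t, hderiv_q σ]
    rfl
  -- the function G = ⟪F, D2⟫ and its t-derivative
  set G : ℝ × ℝ → ℝ := fun p => ⟪F p, D2 p⟫ with hGdef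
  have hGc : ContDiff ℝ 1 G := ContDiff.inner ℝ hF1 hD2c
  have hGd : Differentiable ℝ G := hGc.differentiable one_ne_zero
  have hGt : ∀ σ ∈ J, ∀ t : ℝ, HasDerivAt (fun τ => G (σ, τ))
      (‖D2 (σ, t)‖ ^ 2 - ‖F (σ, t)‖⁻¹) t := by
    intro σ hσ t
    have h1 : HasDerivAt (fun τ => F (σ, τ)) (D2 (σ, t)) t := hqt σ t
    have h3 := HasDerivAt.inner ℝ h1 (hD2t σ t)
    have hn0 : ‖F (σ, t)‖ ≠ 0 := norm_ne_zero_iff.mpr (hne σ hσ t)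
    have h4 : ⟪F (σ, t), fderiv ℝ D2 (σ, t) (0, 1)⟫ + ⟪D2 (σ, t), D2 (σ, t)⟫ =
        ‖D2 (σ, t)‖ ^ 2 - ‖F (σ, t)‖⁻¹ := by
      rw [hNewton σ hσ t, inner_neg_right, real_inner_smul_right,
        real_inner_self_eq_norm_sq, real_inner_self_eq_norm_sq]
      field_simp
      ring
    rw [h4] at h3
    exact h3
  -- integrability of the Maupertuis integrand
  have hL_cont : Continuous fun p : ℝ × ℝ => ‖D2 p‖ ^ 2 := (hD2c.continuous.norm).pow 2
  have hint : ∀ σ u v : ℝ,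
      IntervalIntegrable (fun t => ‖D2 (σ, t)‖ ^ 2) MeasureTheory.volume u v := by
    intro σ u v
    exact (hL_cont.comp (continuous_const.prodMk continuous_id)).intervalIntegrable u v
  -- closed form for arbitrary arcs of the action integral
  have hclosed : ∀ σ ∈ J, ∀ u v : ℝ,
      (∫ t in u..v, ‖D2 (σ, t)‖ ^ 2) =
        (2 * G (σ, v) - 2 * H σ * v) - (2 * G (σ, u) - 2 * H σ * u) := by
    intro σ hσ u v
    apply intervalIntegral.integral_eq_sub_of_hasDerivAt
    · intro t ht
      have h1 := ((hGt σ hσ t).const_mul 2).sub ((hasDerivAt_id t).const_mul (2 * H σ))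
      have h2 : 2 * (‖D2 (σ, t)‖ ^ 2 - ‖F (σ, t)‖⁻¹) - 2 * H σ * 1 = ‖D2 (σ, t)‖ ^ 2 := by
      
      
        rw [hH' σ hσ t]
        ring
      rw [h2] at h1
      convert h1 using 2 <;> simp only [Pi.sub_apply, id] <;> ring
    · exact hint σ u v
  -- splitting of the action integral
  have hsplit : (fun σ => ∫ t in (a σ)..(b σ), ‖deriv (q σ) t‖ ^ 2) =
      fun σ => (∫ t in (a σ)..(a s), ‖D2 (σ, t)‖ ^ 2) +
        ((∫ t in (a s)..(b s), ‖D2 (σ, t)‖ ^ 2) + (∫ t in (b s)..(b σ), ‖D2 (σ, t)‖ ^ 2)) := by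
    funext σ
    simp only [hderiv_q σ]
    rw [← intervalIntegral.integral_add_adjacent_intervals (hint σ (a σ) (a s))
      ((hint σ (a s) (b s)).trans (hint σ (b s) (b σ))),
      ← intervalIntegral.integral_add_adjacent_intervals (hint σ (a s) (b s))
      (hint σ (b s) (b σ))]
  -- partial t-derivative of G via fderiv
  have hGpart : ∀ σ ∈ J, ∀ t : ℝ, fderiv ℝ G (σ, t) (0, 1) = ‖D2 (σ, t)‖ ^ 2 - ‖F (σ, t)‖⁻¹ := by
    intro σ hσ t
    have h1 : HasDerivAt (fun τ => G (σ, τ)) (fderiv ℝ G (σ, t) (0, 1)) t :=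
      (hGd (σ, t)).hasFDerivAt.comp_hasDerivAt t (hcurve_t σ t)
    exact h1.unique (hGt σ hσ t)
  -- derivative of the closed-form boundary terms
  have key : ∀ e : ℝ → ℝ, DifferentiableAt ℝ e s →
      HasDerivAt (fun σ => 2 * G (σ, e σ) - 2 * G (σ, e s) - 2 * H σ * (e σ - e s))
        (deriv e s * ‖D2 (s, e s)‖ ^ 2) s := by
    intro e he'
    have hGe : HasDerivAt (fun σ => G (σ, e σ)) (fderiv ℝ G (s, e s) (1, deriv e s)) s :=
      (hGd _).hasFDerivAt.comp_hasDerivAt s ((hasDerivAt_id s).prodMk he'.hasDerivAt)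
    have hGes : HasDerivAt (fun σ => G (σ, e s)) (fderiv ℝ G (s, e s) (1, 0)) s :=
      (hGd _).hasFDerivAt.comp_hasDerivAt s (hcurve_s s (e s))
    have hHd : HasDerivAt H (deriv H s) s := (hHs 0).differentiableAt.hasDerivAt
    have hmul : HasDerivAt (fun σ => 2 * H σ * (e σ - e s))
        (2 * deriv H s * (e s - e s) + 2 * H s * deriv e s) s :=
      (hHd.const_mul 2).mul (he'.hasDerivAt.sub_const (e s))
    have total := ((hGe.const_mul 2).sub (hGes.const_mul 2)).sub hmul
    have hlin : fderiv ℝ G (s, e s) (1, deriv e s) =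
        fderiv ℝ G (s, e s) (1, 0) + deriv e s * fderiv ℝ G (s, e s) (0, 1) := by
      have h3 : ((1 : ℝ), deriv e s) = ((1 : ℝ), (0 : ℝ)) + deriv e s • ((0 : ℝ), (1 : ℝ)) := by
        simp [Prod.ext_iff]
      rw [h3, map_add, map_smul, smul_eq_mul]
    refine total.congr_deriv ?_
    rw [hlin, hGpart s hs (e s), hH' s hs (e s)]
    have hn0 : ‖F (s, e s)‖ ≠ 0 := norm_ne_zero_iff.mpr (hFst (e s))
    field_simp
    ring
  have hw3 : HasDerivAt (fun σ => ∫ t in (b s)..(b σ), ‖D2 (σ, t)‖ ^ 2)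
      (deriv b s * ‖D2 (s, b s)‖ ^ 2) s := by
    apply HasDerivAt.congr_of_eventuallyEq (key b (hb s hs))
    filter_upwards [hJ.mem_nhds hs] with σ hσ
    rw [hclosed σ hσ (b s) (b σ)]
    ring
  have hw1 : HasDerivAt (fun σ => ∫ t in (a σ)..(a s), ‖D2 (σ, t)‖ ^ 2)
      (-(deriv a s * ‖D2 (s, a s)‖ ^ 2)) s := by
    apply HasDerivAt.congr_of_eventuallyEq (key a (ha s hs)).neg
    filter_upwards [hJ.mem_nhds hs] with σ hσ
    rw [intervalIntegral.integral_symm, hclosed σ hσ (a s) (a σ)]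
    simp only [Pi.neg_apply]
    ring
  -- differentiation under the integral sign for the middle piece
  have hMcont : Continuous fun p : ℝ × ℝ => fderiv ℝ D2 p (1, 0) :=
    (ContinuousLinearMap.apply ℝ (EuclideanSpace ℝ (Fin d)) ((1:ℝ), (0:ℝ))).continuous.comp
      (hD2c.continuous_fderiv one_ne_zero)
  have hF'cont : Continuous fun p : ℝ × ℝ => 2 * ⟪D2 p, fderiv ℝ D2 p (1, 0)⟫ :=
    continuous_const.mul (hD2c.continuous.inner hMcont)
  obtain ⟨C, hC⟩ := ((isCompact_closedBall s 1).prod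
    (isCompact_uIcc (a := a s) (b := b s))).exists_bound_of_continuousOn hF'cont.continuousOn
  have hdiffx : ∀ t x : ℝ, HasDerivAt (fun x => ‖D2 (x, t)‖ ^ 2)
      (2 * ⟪D2 (x, t), fderiv ℝ D2 (x, t) (1, 0)⟫) x := by
    intro t x
    have hcD2 : HasDerivAt (fun σ' => D2 (σ', t)) (fderiv ℝ D2 (x, t) (1, 0)) x := by
      have := (hD2d (x, t)).hasFDerivAt.comp_hasDerivAt x (hcurve_s x t); exact this
    exact hcD2.norm_sq
  have hw2 : HasDerivAt (fun σ => ∫ t in (a s)..(b s), ‖D2 (σ, t)‖ ^ 2)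
      (∫ t in (a s)..(b s), 2 * ⟪D2 (s, t), fderiv ℝ D2 (s, t) (1, 0)⟫) s := by
    refine (intervalIntegral.hasDerivAt_integral_of_dominated_loc_of_deriv_le
      (F := fun x t => ‖D2 (x, t)‖ ^ 2)
      (F' := fun x t => 2 * ⟪D2 (x, t), fderiv ℝ D2 (x, t) (1, 0)⟫)
      (bound := fun _ => C) (s := Metric.ball s 1) (Metric.ball_mem_nhds s one_pos) ?_ ?_ ?_ ?_ ?_ ?_).2
    · exact Filter.Eventually.of_forall fun x =>
        ((hL_cont.comp (continuous_const.prodMk continuous_id)).aestronglyMeasurable)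
    · exact hint s (a s) (b s)
    · exact (hF'cont.comp (continuous_const.prodMk continuous_id)).aestronglyMeasurable
    · refine MeasureTheory.ae_of_all _ fun t ht x hx => ?_
      have := hC (x, t) ⟨Metric.ball_subset_closedBall hx, Set.uIoc_subset_uIcc ht⟩
      simpa using this
    · exact intervalIntegrable_const
    · exact MeasureTheory.ae_of_all _ fun t ht x hx => hdiffx t x
  -- computing the middle integral
  have hcτ : Continuous fun τ : ℝ => ⟪D1 (s, τ), F (s, τ)⟫ / ‖F (s, τ)‖ ^ 3 := by
    apply Continuous.div
    · exact ((hD1c.continuous.comp (continuous_const.prodMk continuous_id)).inner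
        (hF1.continuous.comp (continuous_const.prodMk continuous_id)))
    · exact ((hF1.continuous.comp (continuous_const.prodMk continuous_id)).norm).pow 3
    · exact fun τ => pow_ne_zero 3 (norm_ne_zero_iff.mpr (hFst τ))
  have hDD : ∀ τ : ℝ, HasDerivAt (fun τ => ⟪D1 (s, τ), D2 (s, τ)⟫)
      (deriv H s - 2 * (⟪D1 (s, τ), F (s, τ)⟫ / ‖F (s, τ)‖ ^ 3)) τ := by
    intro τ
    have h1 := HasDerivAt.inner ℝ (hD1t s τ) (hD2t s τ)
    have h2 : ⟪D1 (s, τ), fderiv ℝ D2 (s, τ) (0, 1)⟫ + ⟪fderiv ℝ D2 (s, τ) (1, 0), D2 (s, τ)⟫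
        = deriv H s - 2 * (⟪D1 (s, τ), F (s, τ)⟫ / ‖F (s, τ)‖ ^ 3) := by
      have e1 : ⟪D1 (s, τ), fderiv ℝ D2 (s, τ) (0, 1)⟫ =
          -((‖F (s, τ)‖ ^ 3)⁻¹ * ⟪D1 (s, τ), F (s, τ)⟫) := by
        rw [hNewton s hs τ, inner_neg_right, real_inner_smul_right]
      have e2 : ⟪fderiv ℝ D2 (s, τ) (1, 0), D2 (s, τ)⟫ =
          deriv H s - ⟪D1 (s, τ), F (s, τ)⟫ / ‖F (s, τ)‖ ^ 3 := by
        rw [real_inner_comm]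
        exact he τ
      rw [e1, e2]
      ring
    rw [h2] at h1
    exact h1
  have hgint : IntervalIntegrable
      (fun τ => deriv H s - 2 * (⟪D1 (s, τ), F (s, τ)⟫ / ‖F (s, τ)‖ ^ 3))
      MeasureTheory.volume (a s) (b s) :=
    (continuous_const.sub (continuous_const.mul hcτ)).intervalIntegrable _ _
  have hval : (∫ t in (a s)..(b s), 2 * ⟪D2 (s, t), fderiv ℝ D2 (s, t) (1, 0)⟫)
      = (⟪D1 (s, b s), D2 (s, b s)⟫ - ⟪D1 (s, a s), D2 (s, a s)⟫) + (b s - a s) * deriv H s := by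
    have h1 : ∀ t : ℝ, 2 * ⟪D2 (s, t), fderiv ℝ D2 (s, t) (1, 0)⟫ =
        (deriv H s - 2 * (⟪D1 (s, t), F (s, t)⟫ / ‖F (s, t)‖ ^ 3)) + deriv H s := by
      intro t
      rw [he t]
      ring
    simp only [h1]
    rw [intervalIntegral.integral_add hgint intervalIntegrable_const,
      intervalIntegral.integral_eq_sub_of_hasDerivAt (fun τ _ => hDD τ) hgint,
      intervalIntegral.integral_const]
    simp [smul_eq_mul]
  -- endpoint derivatives
  have hBV : ∀ e : ℝ → ℝ, DifferentiableAt ℝ e s →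
      deriv (fun σ => q σ (e σ)) s = D1 (s, e s) + deriv e s • D2 (s, e s) := by
    intro e he'
    have h1 : HasDerivAt (fun σ => F (σ, e σ)) (fderiv ℝ F (s, e s) (1, deriv e s)) s :=
      (hFd _).hasFDerivAt.comp_hasDerivAt s ((hasDerivAt_id s).prodMk he'.hasDerivAt)
    have h2 : fderiv ℝ F (s, e s) (1, deriv e s) = D1 (s, e s) + deriv e s • D2 (s, e s) := by
      have h3 : ((1 : ℝ), deriv e s) = ((1 : ℝ), (0 : ℝ)) + deriv e s • ((0 : ℝ), (1 : ℝ)) := by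
        simp [Prod.ext_iff]
      rw [h3, map_add, map_smul]
    rw [← h2]
    exact h1.deriv
  -- assembling everything
  rw [hsplit, (HasDerivAt.deriv (f := fun σ => (∫ t in (a σ)..(a s), ‖D2 (σ, t)‖ ^ 2) +
    ((∫ t in (a s)..(b s), ‖D2 (σ, t)‖ ^ 2) + (∫ t in (b s)..(b σ), ‖D2 (σ, t)‖ ^ 2)))
    (hw1.add (hw2.add hw3))), hval, hBV b (hb s hs), hBV a (ha s hs)]
  simp only [hderiv_q s]
  rw [inner_add_left, inner_add_left, real_inner_smul_left, real_inner_smul_left,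
    real_inner_self_eq_norm_sq, real_inner_self_eq_norm_sq]
  ring
end

section
/- Fix d ≥ 1. Let J ⊆ ℝ be an open interval, a, b : J → ℝ differentiable with a(s) < b(s) for all s, and q : J × ℝ → ℝ^d ∖ {0} a C² map such that for each s ∈ J the curve t ↦ q(s, t) solves Newton's system ∂²q/∂t² = −q/‖q‖³. Define A(s) = q(s, a(s)), B(s) = q(s, b(s)), v_A(s) = ∂_t q(s, a(s)), v_B(s) = ∂_t q(s, b(s)), the energy H(s) = ½‖∂_t q(s, t)‖² − 1/‖q(s, t)‖ (independent of t), and the principal function S(s) = ∫_{a(s)}^{b(s)} ( ½‖∂_t q(s, t)‖² + 1/‖q(s, t)‖ ) dt. Then for every s ∈ J, S'(s) = ⟨B'(s), v_B(s)⟩ − ⟨A'(s), v_A(s)⟩ − H(s)·(b'(s) − a'(s)). -/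
open RealInnerProductSpace intervalIntegral Set Metric

lemma hasDerivAt_norm_inv_aux {E : Type*} [NormedAddCommGroup E] [InnerProductSpace ℝ E]
    {f : ℝ → E} {f' : E} {x : ℝ} (hf : HasDerivAt f f' x) (hne : f x ≠ 0) :
    HasDerivAt (fun y => ‖f y‖⁻¹) (-((‖f x‖ ^ 3)⁻¹ * ⟪f x, f'⟫)) x := by
  have h1 : HasDerivAt (fun y => ⟪f y, f y⟫) (⟪f x, f'⟫ + ⟪f', f x⟫) x := hf.inner ℝ hf
  have hip : (⟪f x, f x⟫ : ℝ) ≠ 0 := by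
    simpa [real_inner_self_eq_norm_sq] using pow_ne_zero 2 (norm_ne_zero_iff.2 hne)
  have h2 : HasDerivAt (fun y => Real.sqrt ⟪f y, f y⟫)
      ((1 / (2 * Real.sqrt ⟪f x, f x⟫)) * (⟪f x, f'⟫ + ⟪f', f x⟫)) x :=
    (Real.hasDerivAt_sqrt hip).comp x h1
  have hnorm : (fun y => Real.sqrt ⟪f y, f y⟫) = fun y => ‖f y‖ := by
    funext y
    rw [real_inner_self_eq_norm_sq, Real.sqrt_sq (norm_nonneg _)]
  rw [hnorm, real_inner_self_eq_norm_sq, Real.sqrt_sq (norm_nonneg _)] at h2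
  have h3 := h2.inv (norm_ne_zero_iff.2 hne)
  refine h3.congr_deriv ?_
  have hn : ‖f x‖ ≠ 0 := norm_ne_zero_iff.2 hne
  rw [real_inner_comm (f') (f x)]
  field_simp
  ring

/-- variation of Hamilton's principal function: For a C² one-parameter
family of Keplerian arcs `s ↦ (a(s), b(s), q(s, ·))` in `ℝ^d ∖ {0}`, with endpoints
`A(s) = q(s, a(s))`, `B(s) = q(s, b(s))`, endpoint velocities `v_A, v_B`, energy `H(s)`
(independent of `t`) and principal function
`S(s) = ∫_{a(s)}^{b(s)} (½‖∂_t q(s,t)‖² + 1/‖q(s,t)‖) dt`, one has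
`S'(s) = ⟨B'(s), v_B(s)⟩ − ⟨A'(s), v_A(s)⟩ − H(s)·(b'(s) − a'(s))` on `J`. -/
theorem principal_function_variational_formula
    (d : ℕ) (hd : 1 ≤ d)
    (J : Set ℝ) (hJ : IsOpen J) (hJ' : J.OrdConnected)
    (a b : ℝ → ℝ)
    (ha : ∀ s ∈ J, DifferentiableAt ℝ a s)
    (hb : ∀ s ∈ J, DifferentiableAt ℝ b s)
    (hab : ∀ s ∈ J, a s < b s)
    (q : ℝ → ℝ → EuclideanSpace ℝ (Fin d))
    (hsm : ContDiff ℝ 2 (Function.uncurry q))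
    (hne : ∀ s ∈ J, ∀ t : ℝ, q s t ≠ 0)
    (hN : ∀ s ∈ J, ∀ t : ℝ,
      deriv (deriv (q s)) t = -((‖q s t‖ ^ 3)⁻¹ • q s t))
    (H : ℝ → ℝ)
    (hH : ∀ s ∈ J, ∀ t : ℝ,
      H s = (1 / 2) * ‖deriv (q s) t‖ ^ 2 - 1 / ‖q s t‖) :
    ∀ s ∈ J,
      deriv (fun σ => ∫ t in (a σ)..(b σ),
          ((1 / 2) * ‖deriv (q σ) t‖ ^ 2 + 1 / ‖q σ t‖)) s =
        ⟪deriv (fun σ => q σ (b σ)) s, deriv (q s) (b s)⟫ -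
        ⟪deriv (fun σ => q σ (a σ)) s, deriv (q s) (a s)⟫ -
        H s * (deriv b s - deriv a s) := by
  intro s hs
  set Q : ℝ × ℝ → EuclideanSpace ℝ (Fin d) := Function.uncurry q with hQdef
  have hQ1 : ContDiff ℝ 1 Q := hsm.of_le one_le_two
  have hQd : Differentiable ℝ Q := hQ1.differentiable one_ne_zero
  have hfQ : ∀ p, HasFDerivAt Q (fderiv ℝ Q p) p := fun p => (hQd p).hasFDerivAt
  set v : ℝ × ℝ → EuclideanSpace ℝ (Fin d) := fun p => fderiv ℝ Q p (0, 1) with hvdef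
  set w : ℝ × ℝ → EuclideanSpace ℝ (Fin d) := fun p => fderiv ℝ Q p (1, 0) with hwdef
  have hΦ1 : ContDiff ℝ 1 (fderiv ℝ Q) := hsm.fderiv_right (le_refl 2)
  have hv1 : ContDiff ℝ 1 v := hΦ1.clm_apply contDiff_const
  have hw1 : ContDiff ℝ 1 w := hΦ1.clm_apply contDiff_const
  set Dv : ℝ × ℝ → EuclideanSpace ℝ (Fin d) := fun p => fderiv ℝ v p (1, 0) with hDvdef
  have hDvc : Continuous Dv :=
    (hv1.continuous_fderiv one_ne_zero).clm_apply continuous_const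
  -- curves in t
  have hcurve : ∀ σ t, HasDerivAt (q σ) (v (σ, t)) t := by
    intro σ t
    have h1 : HasDerivAt (fun t : ℝ => (σ, t)) ((0 : ℝ), (1 : ℝ)) t :=
      (hasDerivAt_const t σ).prodMk (hasDerivAt_id t)
    exact (hfQ (σ, t)).comp_hasDerivAt t h1
  have hderiv_eq : ∀ σ t, deriv (q σ) t = v (σ, t) := fun σ t => (hcurve σ t).deriv
  -- partial derivatives in σ
  have hvσ : ∀ σ t, HasDerivAt (fun σ' => v (σ', t)) (Dv (σ, t)) σ := by
    intro σ t
    have h1 : HasDerivAt (fun σ' : ℝ => (σ', t)) ((1 : ℝ), (0 : ℝ)) σ :=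
      (hasDerivAt_id σ).prodMk (hasDerivAt_const σ t)
    exact ((hv1.differentiable one_ne_zero) (σ, t)).hasFDerivAt.comp_hasDerivAt σ h1
  have hQσ : ∀ σ t, HasDerivAt (fun σ' => q σ' t) (w (σ, t)) σ := by
    intro σ t
    have h1 : HasDerivAt (fun σ' : ℝ => (σ', t)) ((1 : ℝ), (0 : ℝ)) σ :=
      (hasDerivAt_id σ).prodMk (hasDerivAt_const σ t)
    exact (hfQ (σ, t)).comp_hasDerivAt σ h1
  -- Newton in terms of v
  have hNewton : ∀ σ ∈ J, ∀ t, HasDerivAt (fun t => v (σ, t))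
      (-((‖q σ t‖ ^ 3)⁻¹ • q σ t)) t := by
    intro σ hσ t
    have hdiff : DifferentiableAt ℝ (fun t : ℝ => v (σ, t)) t := by
      have h1 : DifferentiableAt ℝ (fun t : ℝ => ((σ, t) : ℝ × ℝ)) t :=
        (differentiableAt_const σ).prodMk differentiableAt_id
      exact ((hv1.differentiable one_ne_zero) (σ, t)).comp t h1
    have h2 := hdiff.hasDerivAt
    have h3 : (fun t => v (σ, t)) = deriv (q σ) := (funext fun t => (hderiv_eq σ t)).symm
    rw [show deriv (fun t => v (σ, t)) t = -((‖q σ t‖ ^ 3)⁻¹ • q σ t) from by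
      rw [h3]; exact hN σ hσ t] at h2
    exact h2
  -- symmetry of second derivatives : ∂ₜ w = Dv
  have hΦd : ∀ p, HasFDerivAt (fderiv ℝ Q) (fderiv ℝ (fderiv ℝ Q) p) p :=
    fun p => ((hΦ1.differentiable one_ne_zero) p).hasFDerivAt
  have hvp : ∀ p, HasFDerivAt v ((fderiv ℝ (fderiv ℝ Q) p).flip ((0 : ℝ), (1 : ℝ))) p := by
    intro p
    have h := (hΦd p).clm_apply (hasFDerivAt_const ((0 : ℝ), (1 : ℝ)) p)
    simpa using h
  have hwp : ∀ p, HasFDerivAt w ((fderiv ℝ (fderiv ℝ Q) p).flip ((1 : ℝ), (0 : ℝ))) p := by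
    intro p
    have h := (hΦd p).clm_apply (hasFDerivAt_const ((1 : ℝ), (0 : ℝ)) p)
    simpa using h
  have hDv_eq : ∀ p, Dv p = fderiv ℝ (fderiv ℝ Q) p ((1 : ℝ), (0 : ℝ)) ((0 : ℝ), (1 : ℝ)) := by
    intro p
    have := (hvp p).fderiv
    simp only [hDvdef, this]
    rfl
  have hwt : ∀ σ t, HasDerivAt (fun t => w (σ, t)) (Dv (σ, t)) t := by
    intro σ t
    have h1 : HasDerivAt (fun t : ℝ => (σ, t)) ((0 : ℝ), (1 : ℝ)) t :=
      (hasDerivAt_const t σ).prodMk (hasDerivAt_id t)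
    have h2 := (hwp (σ, t)).comp_hasDerivAt t h1
    have h3 : ((fderiv ℝ (fderiv ℝ Q) (σ, t)).flip ((1 : ℝ), (0 : ℝ))) ((0 : ℝ), (1 : ℝ)) =
        Dv (σ, t) := by
      rw [hDv_eq (σ, t)]
      exact second_derivative_symmetric hfQ (hΦd (σ, t)) _ _
    rw [← h3]
    exact h2
  -- the Lagrangian and its σ-derivative
  set L : ℝ × ℝ → ℝ := fun p => (1 / 2) * ‖v p‖ ^ 2 + ‖Q p‖⁻¹ with hLdef
  set g : ℝ × ℝ → ℝ := fun p => ⟪Dv p, v p⟫ - (‖Q p‖ ^ 3)⁻¹ * ⟪Q p, w p⟫ with hgdef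
  have hq : ∀ σ t, Q (σ, t) = q σ t := fun _ _ => rfl
  have hLσ : ∀ σ ∈ J, ∀ t, HasDerivAt (fun σ' => L (σ', t)) (g (σ, t)) σ := by
    intro σ hσ t
    have h1 : HasDerivAt (fun σ' => ⟪v (σ', t), v (σ', t)⟫)
        (⟪v (σ, t), Dv (σ, t)⟫ + ⟪Dv (σ, t), v (σ, t)⟫) σ := (hvσ σ t).inner ℝ (hvσ σ t)
    have h2 := h1.const_mul (1 / 2 : ℝ)
    have h3 := hasDerivAt_norm_inv_aux (hQσ σ t) (hne σ hσ t)
    have h4 := h2.add h3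
    have hfeq : (fun σ' => L (σ', t)) =
        fun σ' => (1 / 2 : ℝ) * ⟪v (σ', t), v (σ', t)⟫ + ‖q σ' t‖⁻¹ := by
      funext σ'
      simp only [hLdef, real_inner_self_eq_norm_sq, hq]
    rw [hfeq]
    refine h4.congr_deriv ?_
    simp only [hgdef, hq]
    rw [real_inner_comm (v (σ, t)) (Dv (σ, t))]
    ring
  have hU : IsOpen (J ×ˢ (univ : Set ℝ)) := hJ.prod isOpen_univ
  have hQne : ∀ p : ℝ × ℝ, p ∈ J ×ˢ (univ : Set ℝ) → Q p ≠ 0 := fun p hp => hne p.1 hp.1 p.2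
  have hLcont : ContinuousOn L (J ×ˢ (univ : Set ℝ)) := by
    have h1 : Continuous fun p : ℝ × ℝ => (1 / 2 : ℝ) * ‖v p‖ ^ 2 :=
      continuous_const.mul ((hv1.continuous.norm).pow 2)
    have h2 : ContinuousOn (fun p : ℝ × ℝ => ‖Q p‖⁻¹) (J ×ˢ (univ : Set ℝ)) :=
      (hQ1.continuous.norm.continuousOn).inv₀ fun p hp =>
        norm_ne_zero_iff.2 (hQne p hp)
    exact h1.continuousOn.add h2
  have hgcont : ContinuousOn g (J ×ˢ (univ : Set ℝ)) := by
    have h1 : Continuous fun p : ℝ × ℝ => (⟪Dv p, v p⟫ : ℝ) := hDvc.inner hv1.continuous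
    have h2 : ContinuousOn (fun p : ℝ × ℝ => (‖Q p‖ ^ 3)⁻¹ * ⟪Q p, w p⟫)
        (J ×ˢ (univ : Set ℝ)) := by
      refine ContinuousOn.mul ?_ (hQ1.continuous.inner hw1.continuous).continuousOn
      exact ((hQ1.continuous.norm.pow 3).continuousOn).inv₀ fun p hp =>
        pow_ne_zero 3 (norm_ne_zero_iff.2 (hQne p hp))
    exact h1.continuousOn.sub h2
  -- FTC part
  set P : ℝ × ℝ → ℝ := fun p => ⟪w p, v p⟫ with hPdef
  have hPt : ∀ σ ∈ J, ∀ t, HasDerivAt (fun t => P (σ, t)) (g (σ, t)) t := by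
    intro σ hσ t
    have h1 := (hwt σ t).inner ℝ (hNewton σ hσ t)
    refine h1.congr_deriv ?_
    simp only [hgdef, hPdef, hq, inner_neg_right, real_inner_smul_right]
    rw [real_inner_comm (q σ t) (w (σ, t))]
    ring
  have hgscont : Continuous (fun t => g (s, t)) :=
    hgcont.comp_continuous (continuous_const.prodMk continuous_id)
      (fun t => ⟨hs, trivial⟩)
  have hLscont : ∀ σ ∈ J, Continuous (fun t => L (σ, t)) := fun σ hσ =>
    hLcont.comp_continuous (continuous_const.prodMk continuous_id)
      (fun t => ⟨hσ, trivial⟩)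
  have hFTC : ∫ t in (a s)..(b s), g (s, t) = P (s, b s) - P (s, a s) :=
    intervalIntegral.integral_eq_sub_of_hasDerivAt (fun t _ => hPt s hs t)
      (hgscont.intervalIntegrable _ _)
  -- main derivative computation
  obtain ⟨ε, hε, hball⟩ := Metric.isOpen_iff.1 hJ s hs
  have hε' : (0 : ℝ) < ε / 2 := half_pos hε
  have hball' : Metric.closedBall s (ε / 2) ⊆ J := fun x hx =>
    hball (lt_of_le_of_lt hx (half_lt_self hε))
  have hballJ : Metric.ball s (ε / 2) ⊆ J := fun x hx =>
    hball' (ball_subset_closedBall hx)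
  have hsJ : ∀ᶠ σ in nhds s, σ ∈ J := hJ.eventually_mem hs
  have hLs : Continuous fun t => L (s, t) := hLscont s hs
  set G : ℝ → ℝ := fun y => ∫ t in (a s)..y, L (s, t) with hGdef
  have hG : ∀ y, HasDerivAt G (L (s, y)) y := fun y =>
    (hLs.integral_hasStrictDerivAt (a s) y).hasDerivAt
  have hS1 : HasDerivAt (fun σ => G (b σ) - G (a σ))
      (L (s, b s) * deriv b s - L (s, a s) * deriv a s) s :=
    ((hG (b s)).comp s (hb s hs).hasDerivAt).sub ((hG (a s)).comp s (ha s hs).hasDerivAt)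
  -- dominated differentiation for the fixed-endpoint part
  have hcompact : IsCompact (Metric.closedBall s (ε / 2) ×ˢ uIcc (a s) (b s)) :=
    (isCompact_closedBall s (ε / 2)).prod isCompact_uIcc
  have hKU : Metric.closedBall s (ε / 2) ×ˢ uIcc (a s) (b s) ⊆ J ×ˢ (univ : Set ℝ) :=
    fun p hp => ⟨hball' hp.1, trivial⟩
  obtain ⟨M, hM⟩ := hcompact.exists_bound_of_continuousOn (hgcont.mono hKU)
  have hΨ1 : HasDerivAt (fun σ => ∫ t in (a s)..(b s), (L (σ, t) - L (s, t)))
      (∫ t in (a s)..(b s), g (s, t)) s := by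
    refine (intervalIntegral.hasDerivAt_integral_of_dominated_loc_of_deriv_le
      (F := fun σ t => L (σ, t) - L (s, t)) (F' := fun σ t => g (σ, t))
      (bound := fun _ => M) (Metric.ball_mem_nhds s hε') ?_ ?_ ?_ ?_ ?_ ?_).2
    · filter_upwards [hsJ] with σ hσ
      exact (((hLscont σ hσ).sub hLs).aestronglyMeasurable)
    · exact (hLs.sub hLs).intervalIntegrable _ _
    · exact hgscont.aestronglyMeasurable
    · refine MeasureTheory.ae_of_all _ fun t ht x hx => ?_
      exact hM (x, t) ⟨ball_subset_closedBall hx, uIoc_subset_uIcc ht⟩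
    · exact intervalIntegrable_const
    · refine MeasureTheory.ae_of_all _ fun t ht x hx => ?_
      exact (hLσ x (hballJ hx) t).sub_const (L (s, t))
  -- the endpoint corrections are o(σ - s)
  have hlittle : ∀ f : ℝ → ℝ, DifferentiableAt ℝ f s →
      HasDerivAt (fun σ => ∫ t in (f s)..(f σ), (L (σ, t) - L (s, t))) 0 s := by
    intro f hf
    rw [hasDerivAt_iff_isLittleO]
    simp only [intervalIntegral.integral_same, smul_zero, sub_zero]
    rw [Asymptotics.isLittleO_iff]
    intro c hc
    obtain ⟨C, hC, hCO⟩ := (hf.isBigO_sub).exists_pos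
    have hCO' := hCO.bound
    have hcC : (0 : ℝ) < c / C := div_pos hc hC
    have hDcont : ContinuousAt (fun p : ℝ × ℝ => L p - L (s, p.2)) (s, f s) := by
      have h1 : ContinuousAt L (s, f s) := hLcont.continuousAt (hU.mem_nhds ⟨hs, trivial⟩)
      have h2 : ContinuousAt (fun p : ℝ × ℝ => L (s, p.2)) (s, f s) := by
        have hc : Continuous (fun p : ℝ × ℝ => ((s, p.2) : ℝ × ℝ)) :=
          continuous_const.prodMk continuous_snd
        exact ContinuousAt.comp (x := ((s, f s) : ℝ × ℝ)) h1 hc.continuousAt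
      exact h1.sub h2
    have hsmall : ∀ᶠ p : ℝ × ℝ in nhds (s, f s), |L p - L (s, p.2)| < c / C := by
      have h0 : L (s, f s) - L (s, ((s : ℝ), f s).2) = 0 := by simp
      have h1 : Filter.Tendsto (fun p : ℝ × ℝ => L p - L (s, p.2))
          (nhds (s, f s)) (nhds 0) := by
        simpa [h0] using hDcont.tendsto
      have h2 := h1 (Metric.ball_mem_nhds (0 : ℝ) hcC)
      filter_upwards [h2] with p hp
      simpa [Real.dist_eq] using hp
    obtain ⟨δ, hδ, hδ'⟩ := Metric.eventually_nhds_iff.1 hsmall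
    have hev1 : ∀ᶠ σ in nhds s, dist (f σ) (f s) < δ :=
      hf.continuousAt (Metric.ball_mem_nhds (f s) hδ)
    have hev2 : ∀ᶠ σ in nhds s, dist σ s < δ := by
      filter_upwards [Metric.ball_mem_nhds s hδ] with σ hσ
      exact hσ
    filter_upwards [hCO', hev1, hev2, hsJ] with σ h1 h2 h3 h4
    have hbound : ∀ t ∈ Set.uIoc (f s) (f σ), ‖L (σ, t) - L (s, t)‖ ≤ c / C := by
      intro t ht
      have htmem : t ∈ uIcc (f s) (f σ) := uIoc_subset_uIcc ht
      have hdt : dist t (f s) ≤ dist (f s) (f σ) :=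
        Real.dist_le_of_mem_uIcc htmem left_mem_uIcc
      have hdist : dist ((σ, t) : ℝ × ℝ) (s, f s) < δ := by
        rw [Prod.dist_eq]
        exact max_lt h3 (lt_of_le_of_lt hdt (by rwa [dist_comm] at h2))
      have := hδ' hdist
      simp only [Real.norm_eq_abs]
      exact le_of_lt this
    have h5 := intervalIntegral.norm_integral_le_of_norm_le_const hbound
    refine h5.trans ?_
    have h6 : |f σ - f s| ≤ C * ‖σ - s‖ := by
      simpa [Real.norm_eq_abs] using h1
    calc c / C * |f σ - f s| ≤ c / C * (C * ‖σ - s‖) := by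
          apply mul_le_mul_of_nonneg_left h6 (le_of_lt hcC)
      _ = c * ‖σ - s‖ := by field_simp
  have hΨ2 := hlittle b (hb s hs)
  have hΨ3 := hlittle a (ha s hs)
  have htotal := hS1.add ((hΨ1.add hΨ2).sub hΨ3)
  have hev : (fun σ => (G (b σ) - G (a σ)) +
      (((∫ t in (a s)..(b s), (L (σ, t) - L (s, t))) +
        (∫ t in (b s)..(b σ), (L (σ, t) - L (s, t)))) -
        (∫ t in (a s)..(a σ), (L (σ, t) - L (s, t))))) =ᶠ[nhds s]
      (fun σ => ∫ t in (a σ)..(b σ), L (σ, t)) := by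
    filter_upwards [hsJ] with σ hσ
    have hLσc : Continuous fun t => L (σ, t) := hLscont σ hσ
    have hD : Continuous fun t => L (σ, t) - L (s, t) := hLσc.sub hLs
    have e1 : G (b σ) - G (a σ) = ∫ t in (a σ)..(b σ), L (s, t) :=
      intervalIntegral.integral_interval_sub_left (hLs.intervalIntegrable _ _)
        (hLs.intervalIntegrable _ _)
    have e2 : (∫ t in (a σ)..(b σ), L (σ, t)) =
        (∫ t in (a σ)..(b σ), L (s, t)) + ∫ t in (a σ)..(b σ), (L (σ, t) - L (s, t)) := by
      rw [← intervalIntegral.integral_add (hLs.intervalIntegrable _ _)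
        (hD.intervalIntegrable _ _)]
      congr 1
      funext t
      ring
    have eA := intervalIntegral.integral_add_adjacent_intervals (μ := MeasureTheory.volume)
      (hD.intervalIntegrable (a σ) (a s)) (hD.intervalIntegrable (a s) (b σ))
    have eB := intervalIntegral.integral_add_adjacent_intervals (μ := MeasureTheory.volume)
      (hD.intervalIntegrable (a s) (b s)) (hD.intervalIntegrable (b s) (b σ))
    have eC : (∫ t in (a σ)..(a s), (L (σ, t) - L (s, t))) =
        - ∫ t in (a s)..(a σ), (L (σ, t) - L (s, t)) :=
      intervalIntegral.integral_symm _ _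
    rw [e2, e1]
    rw [eC] at eA
    linarith [eA, eB]
  have hmain : HasDerivAt (fun σ => ∫ t in (a σ)..(b σ), L (σ, t))
      ((L (s, b s)) * deriv b s - (L (s, a s)) * deriv a s +
        (P (s, b s) - P (s, a s))) s := by
    have h := htotal.congr_of_eventuallyEq hev.symm
    simpa [hFTC] using h
  -- endpoint derivatives
  have hend : ∀ (f : ℝ → ℝ), DifferentiableAt ℝ f s →
      deriv (fun σ => q σ (f σ)) s = w (s, f s) + deriv f s • v (s, f s) := by
    intro f hf
    have h1 : HasDerivAt (fun σ => (σ, f σ)) ((1 : ℝ), deriv f s) s :=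
      (hasDerivAt_id s).prodMk hf.hasDerivAt
    have h2 := (hfQ (s, f s)).comp_hasDerivAt s h1
    have h3 : fderiv ℝ Q (s, f s) ((1 : ℝ), deriv f s) =
        w (s, f s) + deriv f s • v (s, f s) := by
      have he : ((1 : ℝ), deriv f s) =
          ((1 : ℝ), (0 : ℝ)) + deriv f s • ((0 : ℝ), (1 : ℝ)) := by
        simp [Prod.ext_iff]
      rw [he, map_add, map_smul]
    rw [← h3]
    exact h2.deriv
  have hBend : deriv (fun σ => q σ (b σ)) s = w (s, b s) + deriv b s • v (s, b s) :=
    hend b (hb s hs)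
  have hAend : deriv (fun σ => q σ (a σ)) s = w (s, a s) + deriv a s • v (s, a s) :=
    hend a (ha s hs)
  -- rewrite statement integrand
  have hfun : (fun σ => ∫ t in (a σ)..(b σ),
      ((1 / 2) * ‖deriv (q σ) t‖ ^ 2 + 1 / ‖q σ t‖)) =
      fun σ => ∫ t in (a σ)..(b σ), L (σ, t) := by
    funext σ
    congr 1
    funext t
    rw [hderiv_eq σ t, one_div ‖q σ t‖]
    rfl
  rw [hfun, hmain.deriv, hBend, hAend, hderiv_eq, hderiv_eq]
  have hHb : H s = 1 / 2 * ‖v (s, b s)‖ ^ 2 - ‖q s (b s)‖⁻¹ := by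
    rw [hH s hs (b s), hderiv_eq, one_div ‖q s (b s)‖]
  have hHa : H s = 1 / 2 * ‖v (s, a s)‖ ^ 2 - ‖q s (a s)‖⁻¹ := by
    rw [hH s hs (a s), hderiv_eq, one_div ‖q s (a s)‖]
  simp only [inner_add_left, real_inner_smul_left, real_inner_self_eq_norm_sq]
  have hqb : Q (s, b s) = q s (b s) := rfl
  have hqa : Q (s, a s) = q s (a s) := rfl
  show (1 / 2 * ‖v (s, b s)‖ ^ 2 + ‖Q (s, b s)‖⁻¹) * deriv b s -
      (1 / 2 * ‖v (s, a s)‖ ^ 2 + ‖Q (s, a s)‖⁻¹) * deriv a s +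
      (⟪w (s, b s), v (s, b s)⟫ - ⟪w (s, a s), v (s, a s)⟫) = _
  rw [hqb, hqa]
  linear_combination (deriv b s) * hHb - (deriv a s) * hHa
end

section
/- Let φ ∈ (0, π), M ∈ ℝ, N > 0, and let Ψ : ℝ² → ℝ² be the affine map sending (x₁, y₁) to the point (x₂, y₂) determined by x₁ = x₂·sin φ − M·y₂·cos φ − N·cos φ and y₁ = y₂ (explicitly, Ψ(x₁, y₁) = ((x₁ + M·y₁·cos φ + N·cos φ)/sin φ, y₁)). Then Ψ maps the Keplerian branch {(x, y) ∈ ℝ² : √(x² + y²) = M·y + N} bijectively onto the Keplerian branch {(x, y) ∈ ℝ² : √(x² + y²) = x·cos φ + M·y·sin φ + N·sin φ}. -/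
/-- Lemma 5: For `φ ∈ (0, π)`, `M ∈ ℝ`, `N > 0`, the affine map
`Ψ(x₁, y₁) = ((x₁ + M·y₁·cos φ + N·cos φ)/sin φ, y₁)` maps the Keplerian branch
`{√(x² + y²) = M·y + N}` bijectively onto the branch
`{√(x² + y²) = x·cos φ + M·y·sin φ + N·sin φ}`. -/
theorem affine_map_between_branches
    (φ M N : ℝ) (hφ : φ ∈ Set.Ioo 0 Real.pi) (hN : 0 < N) :
    Set.BijOn
      (fun p : ℝ × ℝ =>
        ((p.1 + M * p.2 * Real.cos φ + N * Real.cos φ) / Real.sin φ, p.2))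
      {p : ℝ × ℝ | Real.sqrt (p.1 ^ 2 + p.2 ^ 2) = M * p.2 + N}
      {p : ℝ × ℝ | Real.sqrt (p.1 ^ 2 + p.2 ^ 2) =
        p.1 * Real.cos φ + M * p.2 * Real.sin φ + N * Real.sin φ} := by
  obtain ⟨hφ0, hφπ⟩ := hφ
  have hs : 0 < Real.sin φ := Real.sin_pos_of_pos_of_lt_pi hφ0 hφπ
  set s := Real.sin φ with hsdef
  set c := Real.cos φ with hcdef
  have hsc : s ^ 2 + c ^ 2 = 1 := by
    rw [hsdef, hcdef]; exact Real.sin_sq_add_cos_sq φ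
  have hc1 : c ^ 2 ≤ 1 := by nlinarith [sq_nonneg s]
  refine ⟨?_, ?_, ?_⟩
  · -- MapsTo
    rintro ⟨x, y⟩ hp
    simp only [Set.mem_setOf_eq] at hp ⊢
    have hR : 0 ≤ M * y + N := hp ▸ Real.sqrt_nonneg _
    have hx2 : x ^ 2 + y ^ 2 = (M * y + N) ^ 2 := by
      have := Real.sq_sqrt (by positivity : (0:ℝ) ≤ x ^ 2 + y ^ 2)
      rw [hp] at this; linarith
    have hxR : x ^ 2 ≤ (M * y + N) ^ 2 := by nlinarith [sq_nonneg y]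
    set X := (x + M * y * c + N * c) / s with hXdef
    have hXs : X * s = x + (M * y + N) * c := by
      rw [hXdef]; field_simp; ring
    have h1 : (X * c + M * y * s + N * s) * s = x * c + (M * y + N) := by
      linear_combination c * hXs + (M * y + N) * hsc
    have h2 : 0 ≤ x * c + (M * y + N) := by
      nlinarith [hxR, hR, hc1, sq_nonneg x]
    have hRHS : 0 ≤ X * c + M * y * s + N * s := by nlinarith [h1, h2, hs]
    have h3 : (X * s) ^ 2 + y ^ 2 * s ^ 2 = ((X * c + M * y * s + N * s) * s) ^ 2 := by
      rw [hXs, h1]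
      linear_combination s ^ 2 * hx2 + ((M * y + N) ^ 2 - x ^ 2) * hsc
    have hkey : X ^ 2 + y ^ 2 = (X * c + M * y * s + N * s) ^ 2 := by
      have hs2 : (0:ℝ) < s ^ 2 := by positivity
      have h4 : (X ^ 2 + y ^ 2) * s ^ 2 = (X * c + M * y * s + N * s) ^ 2 * s ^ 2 := by
        linear_combination h3
      exact mul_right_cancel₀ (ne_of_gt hs2) h4
    rw [hkey, Real.sqrt_sq hRHS]
  · -- InjOn
    rintro ⟨x, y⟩ _ ⟨x', y'⟩ _ h
    simp only [Prod.mk.injEq] at h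
    obtain ⟨h1, h2⟩ := h
    subst h2
    have : x = x' := by
      field_simp at h1
      linarith
    simp [this]
  · -- SurjOn
    rintro ⟨X, Y⟩ hq
    simp only [Set.mem_setOf_eq] at hq
    refine ⟨(X * s - M * Y * c - N * c, Y), ?_, ?_⟩
    · simp only [Set.mem_setOf_eq]
      have hQ : 0 ≤ X * c + M * Y * s + N * s := hq ▸ Real.sqrt_nonneg _
      have hX2 : X ^ 2 + Y ^ 2 = (X * c + M * Y * s + N * s) ^ 2 := by
        have := Real.sq_sqrt (by positivity : (0:ℝ) ≤ X ^ 2 + Y ^ 2)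
        rw [hq] at this; linarith
      have hXQ : X ^ 2 ≤ (X * c + M * Y * s + N * s) ^ 2 := by nlinarith [sq_nonneg Y]
      have h4 : 0 ≤ (X * c + M * Y * s + N * s) - X * c := by
        nlinarith [hQ, hXQ, hc1, sq_nonneg X]
      have h5 : 0 ≤ (M * Y + N) * s := by nlinarith [h4]
      have hR : 0 ≤ M * Y + N := by nlinarith [h5, hs]
      have hkey : (X * s - M * Y * c - N * c) ^ 2 + Y ^ 2 = (M * Y + N) ^ 2 := by
        linear_combination hX2 + (X ^ 2 + (M * Y + N) ^ 2) * hsc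
      rw [hkey, Real.sqrt_sq hR]
    · simp only [Prod.mk.injEq]
      refine ⟨?_, trivial⟩
      field_simp
      ring
end

section
/- Let φ ∈ (0, π), M ∈ ℝ, N > 0, and let Ψ : ℝ² → ℝ² be the affine map sending (x₁, y₁) to the point (x₃, y₃) determined by x₁ = x₃ − M·(cos φ/sin φ)·y₃ − N·cos φ and y₁ = y₃/sin φ (explicitly, Ψ(x₁, y₁) = (x₁ + M·y₁·cos φ + N·cos φ, y₁·sin φ)). Then Ψ maps the Keplerian branch {(x, y) ∈ ℝ² : √(x² + y²) = M·y + N} bijectively onto the Keplerian branch {(x, y) ∈ ℝ² : √(x² + y²) = x·cos φ + M·y·sin φ + N·sin² φ}. -/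
/-- Lemma 6: For `φ ∈ (0, π)`, `M ∈ ℝ`, `N > 0`, the affine map
`Ψ(x₁, y₁) = (x₁ + M·y₁·cos φ + N·cos φ, y₁·sin φ)` maps the Keplerian branch
`{√(x² + y²) = M·y + N}` bijectively onto the branch
`{√(x² + y²) = x·cos φ + M·y·sin φ + N·sin² φ}`. -/
theorem affine_map_between_branches_rescaled
    (φ M N : ℝ) (hφ : φ ∈ Set.Ioo 0 Real.pi) (hN : 0 < N) :
    Set.BijOn
      (fun p : ℝ × ℝ =>
        (p.1 + M * p.2 * Real.cos φ + N * Real.cos φ, p.2 * Real.sin φ))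
      {p : ℝ × ℝ | Real.sqrt (p.1 ^ 2 + p.2 ^ 2) = M * p.2 + N}
      {p : ℝ × ℝ | Real.sqrt (p.1 ^ 2 + p.2 ^ 2) =
        p.1 * Real.cos φ + M * p.2 * Real.sin φ + N * Real.sin φ ^ 2} := by
  set c := Real.cos φ with hc
  set s := Real.sin φ with hsdef
  have hs : 0 < s := Real.sin_pos_of_pos_of_lt_pi hφ.1 hφ.2
  have hcs : c ^ 2 + s ^ 2 = 1 := by
    rw [hc, hsdef]; rw [add_comm]; exact Real.sin_sq_add_cos_sq φ
  refine ⟨?_, ?_, ?_⟩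
  · -- MapsTo
    intro p hp
    simp only [Set.mem_setOf_eq] at hp ⊢
    have hr0 : 0 ≤ M * p.2 + N := hp ▸ Real.sqrt_nonneg _
    have hr2 : (M * p.2 + N) ^ 2 = p.1 ^ 2 + p.2 ^ 2 := by
      rw [← hp, Real.sq_sqrt (by positivity)]
    have habs : |p.1| ≤ M * p.2 + N := by
      rw [← hp]; exact Real.abs_le_sqrt (by nlinarith)
    have hx1 : -(M * p.2 + N) ≤ p.1 := neg_le_of_abs_le habs
    have hx2 : p.1 ≤ M * p.2 + N := le_of_abs_le habs
    have hcb1 : -1 ≤ c := Real.neg_one_le_cos φ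
    have hcb2 : c ≤ 1 := Real.cos_le_one φ
    have hnn : 0 ≤ (M * p.2 + N) + p.1 * c := by nlinarith
    have hsq : (p.1 + M * p.2 * c + N * c) ^ 2 + (p.2 * s) ^ 2
        = ((M * p.2 + N) + p.1 * c) ^ 2 := by
      linear_combination (-(s ^ 2)) * hr2 + ((M * p.2 + N) ^ 2 - p.1 ^ 2) * hcs
    rw [hsq, Real.sqrt_sq hnn]
    linear_combination (-(M * p.2 + N)) * hcs
  · -- InjOn
    intro a _ b _ h
    simp only [Prod.mk.injEq] at h
    have h2 : a.2 = b.2 := by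
      have := h.2
      field_simp at this
      linarith
    have h1 : a.1 = b.1 := by
      have := h.1
      rw [h2] at this
      linarith
    exact Prod.ext h1 h2
  · -- SurjOn
    intro q hq
    simp only [Set.mem_setOf_eq] at hq
    refine ⟨(q.1 - M * (q.2 / s) * c - N * c, q.2 / s), ?_, ?_⟩
    · simp only [Set.mem_setOf_eq]
      obtain ⟨x, y, t, hxdef, hydef, htdef⟩ :
          ∃ x y t : ℝ, x = q.1 - M * (q.2 / s) * c - N * c ∧ y = q.2 / s ∧
            t = M * y + N := ⟨_, _, _, rfl, rfl, rfl⟩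
      rw [← hxdef, ← hydef, ← htdef]
      have hq2 : q.2 = y * s := by rw [hydef]; field_simp
      have hq1 : q.1 = x + t * c := by rw [hxdef, htdef, hydef, hq2]; ring
      have hR0 : 0 ≤ q.1 * c + M * q.2 * s + N * s ^ 2 := hq ▸ Real.sqrt_nonneg _
      have hR2 : (q.1 * c + M * q.2 * s + N * s ^ 2) ^ 2 = q.1 ^ 2 + q.2 ^ 2 := by
        rw [← hq, Real.sq_sqrt (by positivity)]
      have hReq : q.1 * c + M * q.2 * s + N * s ^ 2 = x * c + t := by
        rw [hq1, hq2, htdef]; linear_combination (M * y + N) * hcs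
      rw [hReq] at hR0 hR2
      rw [hq1, hq2] at hR2
      have hss : (0:ℝ) < s ^ 2 := by positivity
      have key : t ^ 2 * s ^ 2 = (x ^ 2 + y ^ 2) * s ^ 2 := by
        linear_combination hR2 + (t ^ 2 - x ^ 2) * hcs
      have ht2 : t ^ 2 = x ^ 2 + y ^ 2 := mul_right_cancel₀ hss.ne' key
      have ht0 : 0 ≤ t := by
        by_contra hlt
        push_neg at hlt
        have hxc : 0 < x * c - t := by linarith
        have hsq2 : t ^ 2 ≤ (x * c) ^ 2 := by
          nlinarith [mul_nonneg hR0 hxc.le]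
        have hy2 : y ^ 2 ≤ 0 := by nlinarith [sq_nonneg (x * s)]
        have hy0 : y = 0 := by
          have : y ^ 2 = 0 := le_antisymm hy2 (sq_nonneg y)
          exact (pow_eq_zero_iff two_ne_zero).mp this
        rw [hy0] at htdef
        simp at htdef
        linarith
      rw [show x ^ 2 + y ^ 2 = t ^ 2 from ht2.symm, Real.sqrt_sq ht0]
    · refine Prod.ext ?_ ?_
      · show q.1 - M * (q.2 / s) * c - N * c + M * (q.2 / s) * c + N * c = q.1
        ring
      · show q.2 / s * s = q.2
        field_simp
end

section
/- Let α, β ∈ ℝ and γ > 0, and suppose there exist two distinct points A = (x_A, y_A) and B = (x_B, y_B) with the same ordinate y_A = y_B (a horizontal chord) lying on the Keplerian branch {(x, y) : √(x² + y²) = α·x + β·y + γ}. Then α² < 1, and there is a unique triple (φ, M, N) ∈ (0, π) × ℝ × (0, ∞) such that α = cos φ, β = M·sin φ, and γ = N·sin² φ; consequently the given branch is the image of the vertical branch {(x, y) : √(x² + y²) = M·y + N} by the affine map (x₁, y₁) ↦ (x₁ + M·y₁·cos φ + N·cos φ, y₁·sin φ). -/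
lemma abs_le_sqrt_aux (x y : ℝ) : |x| ≤ Real.sqrt (x ^ 2 + y ^ 2) := by
  rw [← Real.sqrt_sq_eq_abs]
  exact Real.sqrt_le_sqrt (by nlinarith [sq_nonneg y])

lemma sq_sqrt_aux (x y : ℝ) : Real.sqrt (x ^ 2 + y ^ 2) ^ 2 = x ^ 2 + y ^ 2 :=
  Real.sq_sqrt (by positivity)

lemma alpha_sq_lt_one (α β γ : ℝ) (hγ : 0 < γ) (xA y xB : ℝ) (hx : xA ≠ xB)
    (hA : Real.sqrt (xA ^ 2 + y ^ 2) = α * xA + β * y + γ)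
    (hB : Real.sqrt (xB ^ 2 + y ^ 2) = α * xB + β * y + γ) :
    α ^ 2 < 1 := by
  by_contra h
  push_neg at h
  set rA := Real.sqrt (xA ^ 2 + y ^ 2) with hrA
  set rB := Real.sqrt (xB ^ 2 + y ^ 2) with hrB
  have hrA0 : 0 ≤ rA := Real.sqrt_nonneg _
  have hrB0 : 0 ≤ rB := Real.sqrt_nonneg _
  have hrA2 : rA ^ 2 = xA ^ 2 + y ^ 2 := sq_sqrt_aux _ _
  have hrB2 : rB ^ 2 = xB ^ 2 + y ^ 2 := sq_sqrt_aux _ _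
  have haA : |xA| ≤ rA := abs_le_sqrt_aux _ _
  have haB : |xB| ≤ rB := abs_le_sqrt_aux _ _
  have hdiff : rA - rB = α * (xA - xB) := by linarith
  have h1 : (rA - rB) * (rA + rB) = (xA - xB) * (xA + xB) := by nlinarith
  have hsum : α * (rA + rB) = xA + xB := by
    have h2 : (xA - xB) * (α * (rA + rB)) = (xA - xB) * (xA + xB) := by
      linear_combination h1 - (rA + rB) * hdiff
    exact mul_left_cancel₀ (sub_ne_zero.mpr hx) h2
  have habs : |xA + xB| ≤ rA + rB := le_trans (abs_add_le xA xB) (by linarith)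
  have hone : 1 ≤ |α| := by nlinarith [sq_abs α, abs_nonneg α]
  have hsum' : |α| * (rA + rB) = |xA + xB| := by
    rw [← abs_of_nonneg (by linarith : (0:ℝ) ≤ rA + rB), ← abs_mul, hsum]
  rcases eq_or_lt_of_le hone with heq | hlt
  · -- |α| = 1
    have heq' : |α| = 1 := heq.symm
    have hsum'' : |xA + xB| = rA + rB := by rw [← hsum', heq', one_mul]
    have habs2 : |xA + xB| ≤ |xA| + |xB| := abs_add_le xA xB
    have heA : rA = |xA| := by linarith
    have heB : rB = |xB| := by linarith
    have hy2 : y ^ 2 = 0 := by nlinarith [sq_abs xA]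
    have hy0 : y = 0 := by
      have := pow_eq_zero_iff (n := 2) (by norm_num) |>.mp hy2
      exact this
    have eA : |xA| = α * xA + γ := by rw [hy0] at hA; rw [heA] at hA; linarith
    have eB : |xB| = α * xB + γ := by rw [hy0] at hB; rw [heB] at hB; linarith
    apply hx
    rcases (abs_eq (by norm_num : (0:ℝ) ≤ 1)).mp heq' with rfl | rfl <;>
      rcases abs_cases xA with ⟨e1, _⟩ | ⟨e1, _⟩ <;>
      rcases abs_cases xB with ⟨e2, _⟩ | ⟨e2, _⟩ <;> linarith
  · -- |α| > 1
    have hz : rA + rB ≤ 0 := by nlinarith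
    have hA0 : xA = 0 := abs_eq_zero.mp (le_antisymm (by linarith) (abs_nonneg _))
    have hB0 : xB = 0 := abs_eq_zero.mp (le_antisymm (by linarith) (abs_nonneg _))
    exact hx (hA0.trans hB0.symm)

lemma image_eq_aux (α M N φ : ℝ) (hα : α ^ 2 < 1) (hφ1 : 0 < φ) (hφ2 : φ < Real.pi)
    (hcos : α = Real.cos φ) :
    {p : ℝ × ℝ | Real.sqrt (p.1 ^ 2 + p.2 ^ 2) =
        α * p.1 + M * Real.sin φ * p.2 + N * Real.sin φ ^ 2} =
      (fun p : ℝ × ℝ =>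
        (p.1 + M * p.2 * Real.cos φ + N * Real.cos φ, p.2 * Real.sin φ)) ''
      {p : ℝ × ℝ | Real.sqrt (p.1 ^ 2 + p.2 ^ 2) = M * p.2 + N} := by
  have hs : 0 < Real.sin φ := Real.sin_pos_of_pos_of_lt_pi hφ1 hφ2
  set s := Real.sin φ with hsdef
  have hpyth : s ^ 2 = 1 - α ^ 2 := by
    rw [hcos]; nlinarith [Real.sin_sq_add_cos_sq φ]
  have hm1 : -1 < α := by nlinarith
  have h1 : α < 1 := by nlinarith
  rw [← hcos]
  ext p
  obtain ⟨x, yv⟩ := p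
  simp only [Set.mem_setOf_eq, Set.mem_image]
  constructor
  · intro hp
    set r := Real.sqrt (x ^ 2 + yv ^ 2) with hr
    have hr0 : 0 ≤ r := Real.sqrt_nonneg _
    have hr2 : r ^ 2 = x ^ 2 + yv ^ 2 := sq_sqrt_aux _ _
    have hrx := abs_le.mp (abs_le_sqrt_aux x yv)
    rw [← hr] at hrx
    have hαx : α * x ≤ r := by
      rcases le_or_gt 0 x with hx0 | hx0
      · nlinarith [hrx.2]
      · nlinarith [hrx.1]
    refine ⟨((x - α * r) / s ^ 2, yv / s), ?_, ?_⟩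
    · show Real.sqrt _ = M * (yv / s) + N
      have hrhs : M * (yv / s) + N = (r - α * x) / s ^ 2 := by
        have hys : yv / s * s = yv := div_mul_cancel₀ yv hs.ne'
        rw [eq_div_iff (by positivity)]
        linear_combination (-1) * hp + (M * s) * hys
      rw [hrhs]
      have e1 : (x - α * r) ^ 2 + yv ^ 2 * s ^ 2 = (r - α * x) ^ 2 := by
        linear_combination (α ^ 2 - 1) * hr2 + yv ^ 2 * hpyth
      have harg : ((x - α * r) / s ^ 2) ^ 2 + (yv / s) ^ 2 = ((r - α * x) / s ^ 2) ^ 2 := by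
        calc ((x - α * r) / s ^ 2) ^ 2 + (yv / s) ^ 2
            = ((x - α * r) ^ 2 + yv ^ 2 * s ^ 2) / (s ^ 2) ^ 2 := by
              field_simp
          _ = (r - α * x) ^ 2 / (s ^ 2) ^ 2 := by rw [e1]
          _ = ((r - α * x) / s ^ 2) ^ 2 := by rw [div_pow]
      rw [harg, Real.sqrt_sq (div_nonneg (by linarith) (by positivity))]
    · simp only [Prod.mk.injEq]
      constructor
      · have hys : yv / s * s = yv := div_mul_cancel₀ yv hs.ne'
        have h2 : (x - α * r) / s ^ 2 * s ^ 2 = x - α * r := div_mul_cancel₀ _ (by positivity)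
        apply mul_right_cancel₀ (pow_ne_zero 2 hs.ne')
        linear_combination h2 + (M * α * s) * hys - α * hp - x * hpyth
      · field_simp
  · rintro ⟨⟨u, v⟩, hq, hfq⟩
    simp only [Prod.mk.injEq] at hfq
    obtain ⟨h1', h2'⟩ := hfq
    subst h1' h2'
    set ρ := Real.sqrt (u ^ 2 + v ^ 2) with hρ
    have hρ0 : 0 ≤ ρ := Real.sqrt_nonneg _
    have hρ2 : ρ ^ 2 = u ^ 2 + v ^ 2 := sq_sqrt_aux _ _
    have hρu := abs_le.mp (abs_le_sqrt_aux u v)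
    rw [← hρ] at hρu
    have hq' : ρ = M * v + N := hq
    have hnn : 0 ≤ α * u + ρ := by
      rcases le_or_gt 0 u with hu0 | hu0
      · nlinarith [hρu.1]
      · nlinarith [hρu.2]
    have harg : (u + M * v * α + N * α) ^ 2 + (v * s) ^ 2 = (α * u + ρ) ^ 2 := by
      linear_combination (-(α ^ 2 * (M * v + N + ρ) + 2 * α * u)) * hq' + (α ^ 2 - 1) * hρ2 + v ^ 2 * hpyth
    rw [harg, Real.sqrt_sq hnn]
    linear_combination hq' - (M * v + N) * hpyth

/-- Lemma 7: If the Keplerian branch `{√(x² + y²) = α·x + β·y + γ}`,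
`γ > 0`, possesses a horizontal chord (two distinct points with the same ordinate),
then `α² < 1` and there is a unique triple `(φ, M, N) ∈ (0, π) × ℝ × (0, ∞)` with
`α = cos φ`, `β = M·sin φ`, `γ = N·sin² φ`; for such a triple the branch is the image
of the vertical branch `{√(x² + y²) = M·y + N}` by the affine map
`(x₁, y₁) ↦ (x₁ + M·y₁·cos φ + N·cos φ, y₁·sin φ)`. -/
theorem branch_with_horizontal_chord_is_image_of_vertical_branch
    (α β γ : ℝ) (hγ : 0 < γ)
    (xA yA xB yB : ℝ) (hAB : (xA, yA) ≠ (xB, yB)) (hy : yA = yB)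
    (hA : Real.sqrt (xA ^ 2 + yA ^ 2) = α * xA + β * yA + γ)
    (hB : Real.sqrt (xB ^ 2 + yB ^ 2) = α * xB + β * yB + γ) :
    α ^ 2 < 1 ∧
    (∃! p : ℝ × ℝ × ℝ, p.1 ∈ Set.Ioo 0 Real.pi ∧ 0 < p.2.2 ∧
      α = Real.cos p.1 ∧ β = p.2.1 * Real.sin p.1 ∧ γ = p.2.2 * Real.sin p.1 ^ 2) ∧
    (∀ φ M N : ℝ, φ ∈ Set.Ioo 0 Real.pi → 0 < N →
      α = Real.cos φ → β = M * Real.sin φ → γ = N * Real.sin φ ^ 2 →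
      {p : ℝ × ℝ | Real.sqrt (p.1 ^ 2 + p.2 ^ 2) = α * p.1 + β * p.2 + γ} =
        (fun p : ℝ × ℝ =>
          (p.1 + M * p.2 * Real.cos φ + N * Real.cos φ, p.2 * Real.sin φ)) ''
        {p : ℝ × ℝ | Real.sqrt (p.1 ^ 2 + p.2 ^ 2) = M * p.2 + N}) := by

  have hx : xA ≠ xB := by
    intro h; exact hAB (by rw [h, hy])
  rw [hy] at hA
  have hα : α ^ 2 < 1 := alpha_sq_lt_one α β γ hγ xA yB xB hx hA hB
  have hm1 : -1 < α := by nlinarith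
  have h1 : α < 1 := by nlinarith
  set s := Real.sqrt (1 - α ^ 2) with hsdef
  have hs : 0 < s := Real.sqrt_pos.mpr (by nlinarith)
  have hs2 : s ^ 2 = 1 - α ^ 2 := Real.sq_sqrt (by nlinarith)
  refine ⟨hα, ?_, ?_⟩
  · refine ⟨(Real.arccos α, β / s, γ / s ^ 2), ?_, ?_⟩
    · refine ⟨⟨Real.arccos_pos.mpr h1, lt_of_le_of_ne (Real.arccos_le_pi α) (fun h => by have := Real.arccos_eq_pi.mp h; linarith)⟩, by positivity, ?_, ?_, ?_⟩
      · exact (Real.cos_arccos (by linarith) (by linarith)).symm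
      · rw [Real.sin_arccos, ← hsdef]; field_simp
      · rw [Real.sin_arccos, ← hsdef]; field_simp
    · rintro ⟨φ', M', N'⟩ ⟨⟨hφ1, hφ2⟩, hN', hc', hM', hNγ'⟩
      have hφ : φ' = Real.arccos α := by
        rw [hc', Real.arccos_cos hφ1.le hφ2.le]
      have hsin' : Real.sin φ' = s := by
        rw [hφ, Real.sin_arccos, ← hsdef]
      simp only [Prod.mk.injEq]
      refine ⟨hφ, ?_, ?_⟩
      · rw [hsin'] at hM'; rw [eq_div_iff hs.ne']; exact hM'.symm
      · rw [hsin'] at hNγ'; rw [eq_div_iff (by positivity)]; exact hNγ'.symm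
  · intro φ M N hφ hN hcos hsin hγ'
    rw [hsin, hγ']
    exact image_eq_aux α M N φ hα hφ.1 hφ.2 hcos
end

section
/- Let φ ∈ (0, π), M ∈ ℝ, N > 0, and let Ψ : ℝ² → ℝ² be the affine map Ψ(x₁, y₁) = (x₁ + M·y₁·cos φ + N·cos φ, y₁·sin φ). Let A = (x_A, y) and B = (x_B, y) be two distinct points with the same ordinate lying on the vertical Keplerian branch {(x, y) : √(x² + y²) = M·y + N}. Then the images preserve the chord data: ‖Ψ(A) − Ψ(B)‖ = ‖A − B‖ and ‖Ψ(A)‖ + ‖Ψ(B)‖ = ‖A‖ + ‖B‖. -/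
/-- Lemma 8: The affine map
`Ψ(x₁, y₁) = (x₁ + M·y₁·cos φ + N·cos φ, y₁·sin φ)` sends any horizontal chord
`AB` of the vertical Keplerian branch `{√(x² + y²) = M·y + N}` onto a chord of the
same length `‖AB‖` and the same sum of radii `‖OA‖ + ‖OB‖`. -/
theorem affine_map_preserves_chord_data
    (φ M N : ℝ) (hφ : φ ∈ Set.Ioo 0 Real.pi) (hN : 0 < N)
    (xA xB y : ℝ) (hne : xA ≠ xB)
    (hA : Real.sqrt (xA ^ 2 + y ^ 2) = M * y + N)
    (hB : Real.sqrt (xB ^ 2 + y ^ 2) = M * y + N) :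
    Real.sqrt
        (((xA + M * y * Real.cos φ + N * Real.cos φ) -
            (xB + M * y * Real.cos φ + N * Real.cos φ)) ^ 2 +
          (y * Real.sin φ - y * Real.sin φ) ^ 2) =
      Real.sqrt ((xA - xB) ^ 2 + (y - y) ^ 2) ∧
    Real.sqrt ((xA + M * y * Real.cos φ + N * Real.cos φ) ^ 2 +
          (y * Real.sin φ) ^ 2) +
      Real.sqrt ((xB + M * y * Real.cos φ + N * Real.cos φ) ^ 2 +
          (y * Real.sin φ) ^ 2) =
      Real.sqrt (xA ^ 2 + y ^ 2) + Real.sqrt (xB ^ 2 + y ^ 2) := by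
  set R := M * y + N with hR
  have hRnn : 0 ≤ R := hA ▸ Real.sqrt_nonneg _
  have hA2 : xA ^ 2 + y ^ 2 = R ^ 2 := by
    rw [← hA, Real.sq_sqrt (by positivity)]
  have hB2 : xB ^ 2 + y ^ 2 = R ^ 2 := by
    rw [← hB, Real.sq_sqrt (by positivity)]
  have key : ∀ x : ℝ, x ^ 2 + y ^ 2 = R ^ 2 →
      (x + M * y * Real.cos φ + N * Real.cos φ) ^ 2 + (y * Real.sin φ) ^ 2
        = (R + x * Real.cos φ) ^ 2 := by
    intro x hx
    have hs : Real.sin φ ^ 2 = 1 - Real.cos φ ^ 2 := Real.sin_sq φ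
    have hc : x + M * y * Real.cos φ + N * Real.cos φ = x + R * Real.cos φ := by
      rw [hR]; ring
    rw [hc]
    linear_combination (1 - Real.cos φ ^ 2) * hx + y ^ 2 * hs
  have habs : ∀ x : ℝ, x ^ 2 + y ^ 2 = R ^ 2 →
      Real.sqrt ((x + M * y * Real.cos φ + N * Real.cos φ) ^ 2 + (y * Real.sin φ) ^ 2)
        = |R + x * Real.cos φ| := by
    intro x hx
    rw [key x hx, Real.sqrt_sq_eq_abs]
  have hxle : ∀ x : ℝ, x ^ 2 + y ^ 2 = R ^ 2 → |x * Real.cos φ| ≤ R := by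
    intro x hx
    have h1 : |x * Real.cos φ| ≤ |x| := by
      rw [abs_mul]
      nlinarith [abs_nonneg x, Real.abs_cos_le_one φ, abs_nonneg (Real.cos φ)]
    have h2 : |x| ≤ R := by
      have := abs_nonneg x
      nlinarith [sq_abs x, sq_nonneg y]
    linarith
  refine ⟨by ring_nf, ?_⟩
  rw [habs xA hA2, habs xB hB2, hA, hB]
  have hxBA : xB = -xA := by
    have : (xB - xA) * (xB + xA) = 0 := by nlinarith [hA2, hB2]
    rcases mul_eq_zero.1 this with h | h
    · exact absurd (by linarith) hne
    · linarith
  have h1 := hxle xA hA2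
  rw [hxBA]
  rw [abs_le] at h1
  rw [abs_of_nonneg (by linarith [h1.1, h1.2, neg_abs_le (xA * Real.cos φ)] : (0:ℝ) ≤ R + xA * Real.cos φ),
      abs_of_nonneg (by nlinarith [h1.1, h1.2] : (0:ℝ) ≤ R + -xA * Real.cos φ)]
  ring
end

section
/- Terquem's chord theorem. Let α, β ∈ ℝ and γ > 0 with α² + β² < 1, so that E = {(x, y) ∈ ℝ² : √(x² + y²) = α·x + β·y + γ} is an ellipse with a focus at the origin O, semimajor axis a = γ/(1 − α² − β²), and center of ordinate β·a. Then the set {x ∈ ℝ : (x, 0) ∈ E} (the chord through the focus O along the x-axis) has exactly two elements x₁ < x₂, the set {x ∈ ℝ : (x, β·a) ∈ E} (the parallel chord through the center) has exactly two elements x₃ < x₄, and (x₄ − x₃)² = (x₂ − x₁)·2a. That is, the focal chord, the parallel central chord, and the major axis 2a have their lengths in geometric progression. -/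
set_option maxHeartbeats 1000000


/-- Terquem's chord theorem: For the ellipse
`E = {(x, y) : √(x² + y²) = α·x + β·y + γ}` with `γ > 0` and `α² + β² < 1`, with
semimajor axis `a = γ/(1 − α² − β²)` and center of ordinate `β·a`, the horizontal
chord through the focus `O`, the parallel chord through the center, and the major
axis `2a` have their lengths in geometric progression. -/
theorem terquem_chord_theorem
    (α β γ : ℝ) (hγ : 0 < γ) (he : α ^ 2 + β ^ 2 < 1)
    (a : ℝ) (ha : a = γ / (1 - α ^ 2 - β ^ 2)) :
    ∃ x₁ x₂ x₃ x₄ : ℝ, x₁ < x₂ ∧ x₃ < x₄ ∧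
      {x : ℝ | Real.sqrt (x ^ 2 + 0 ^ 2) = α * x + β * 0 + γ} = {x₁, x₂} ∧
      {x : ℝ | Real.sqrt (x ^ 2 + (β * a) ^ 2) = α * x + β * (β * a) + γ} =
        {x₃, x₄} ∧
      (x₄ - x₃) ^ 2 = (x₂ - x₁) * (2 * a) := by
  have hk : 0 < 1 - α ^ 2 - β ^ 2 := by nlinarith
  have h1a : 0 < 1 - α ^ 2 := by nlinarith [sq_nonneg β]
  have hα1 : α < 1 := by nlinarith [sq_nonneg α]
  have hα2 : -1 < α := by nlinarith [sq_nonneg α]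
  have ha' : (1 - α ^ 2 - β ^ 2) * a = γ := by rw [ha]; field_simp
  have hapos : 0 < a := by rw [ha]; positivity
  have hc' : (1 - α ^ 2 - β ^ 2) * (β ^ 2 * a + γ) = γ * (1 - α ^ 2) := by
    linear_combination (β ^ 2) * ha'
  have hCpos : 0 < β ^ 2 * a + γ := by
    have := mul_nonneg (sq_nonneg β) hapos.le; linarith
  obtain ⟨d, hdpos, hd2⟩ : ∃ d : ℝ, 0 < d ∧
      (1 - α ^ 2 - β ^ 2) * d ^ 2 = γ ^ 2 * (1 - α ^ 2) := by
    refine ⟨Real.sqrt (γ ^ 2 * (1 - α ^ 2) / (1 - α ^ 2 - β ^ 2)),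
      Real.sqrt_pos.mpr (by positivity), ?_⟩
    rw [Real.sq_sqrt (by positivity)]; field_simp
  have hid : (1 - α ^ 2 - β ^ 2) ^ 2 * ((β ^ 2 * a + γ) ^ 2 - α ^ 2 * d ^ 2)
      = γ ^ 2 * (1 - α ^ 2) * ((1 - α ^ 2) ^ 2 + α ^ 2 * β ^ 2) := by
    linear_combination ((1 - α ^ 2 - β ^ 2) * (β ^ 2 * a + γ) + γ * (1 - α ^ 2)) * hc'
      - (α ^ 2 * (1 - α ^ 2 - β ^ 2)) * hd2
  have hcd : α ^ 2 * d ^ 2 ≤ (β ^ 2 * a + γ) ^ 2 := by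
    have h3 : 0 ≤ γ ^ 2 * (1 - α ^ 2) * ((1 - α ^ 2) ^ 2 + α ^ 2 * β ^ 2) := by positivity
    nlinarith [hid, h3, mul_pos hk hk]
  have hCd1 : α * d ≤ β ^ 2 * a + γ := by nlinarith [hcd, hCpos, hdpos]
  have hCd2 : -(α * d) ≤ β ^ 2 * a + γ := by nlinarith [hcd, hCpos, hdpos]
  have poly_id : ∀ y : ℝ,
      (1 - α ^ 2 - β ^ 2) * (((1 - α ^ 2) * y - (α * (β ^ 2 * a + γ) - d))
          * ((1 - α ^ 2) * y - (α * (β ^ 2 * a + γ) + d)))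
        = (1 - α ^ 2 - β ^ 2) * (1 - α ^ 2)
          * ((y ^ 2 + (β * a) ^ 2) - (α * y + β * (β * a) + γ) ^ 2) := by
    intro y
    linear_combination (-1 : ℝ) * hd2 + (β ^ 2 * a + γ) * hc'
      - ((1 - α ^ 2) * β ^ 2 * a) * ha'
  refine ⟨-γ / (1 + α), γ / (1 - α), (α * (β ^ 2 * a + γ) - d) / (1 - α ^ 2),
    (α * (β ^ 2 * a + γ) + d) / (1 - α ^ 2), ?_, ?_, ?_, ?_, ?_⟩
  · have h1 : 0 < γ / (1 + α) := div_pos hγ (by linarith)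
    have h2 : 0 < γ / (1 - α) := div_pos hγ (by linarith)
    rw [neg_div]; linarith
  · gcongr <;> linarith
  · ext x
    simp only [Set.mem_setOf_eq, Set.mem_insert_iff, Set.mem_singleton_iff]
    constructor
    · intro h
      have hsq : x ^ 2 + 0 ^ 2 = (α * x + β * 0 + γ) ^ 2 := by
        rw [← h, Real.sq_sqrt (by positivity)]
      have key : ((1 + α) * x + γ) * ((1 - α) * x - γ) = 0 := by linear_combination hsq
      rcases mul_eq_zero.mp key with h' | h'
      · left
        have hne : (1 : ℝ) + α ≠ 0 := by linarith
        field_simp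
        linarith
      · right
        have hne : (1 : ℝ) - α ≠ 0 := by linarith
        field_simp
        linarith
    · rintro (rfl | rfl)
      · have hne : (1 : ℝ) + α ≠ 0 := by linarith
        have hv : α * (-γ / (1 + α)) + β * 0 + γ = γ / (1 + α) := by field_simp; ring
        have hsq : (-γ / (1 + α)) ^ 2 + 0 ^ 2 = (α * (-γ / (1 + α)) + β * 0 + γ) ^ 2 := by
          rw [hv]; field_simp; ring
        rw [hsq, Real.sqrt_sq (by rw [hv]; exact (div_pos hγ (by linarith)).le)]
      · have hne : (1 : ℝ) - α ≠ 0 := by linarith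
        have hv : α * (γ / (1 - α)) + β * 0 + γ = γ / (1 - α) := by field_simp; ring
        have hsq : (γ / (1 - α)) ^ 2 + 0 ^ 2 = (α * (γ / (1 - α)) + β * 0 + γ) ^ 2 := by
          rw [hv]; field_simp; ring
        rw [hsq, Real.sqrt_sq (by rw [hv]; exact (div_pos hγ (by linarith)).le)]
  · ext x
    simp only [Set.mem_setOf_eq, Set.mem_insert_iff, Set.mem_singleton_iff]
    have hne3 : (1 : ℝ) - α ^ 2 ≠ 0 := h1a.ne'
    constructor
    · intro h
      have hsq : x ^ 2 + (β * a) ^ 2 = (α * x + β * (β * a) + γ) ^ 2 := by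
        rw [← h, Real.sq_sqrt (by positivity)]
      have key : ((1 - α ^ 2) * x - (α * (β ^ 2 * a + γ) - d))
          * ((1 - α ^ 2) * x - (α * (β ^ 2 * a + γ) + d)) = 0 := by
        have h0 := poly_id x
        have : (1 - α ^ 2 - β ^ 2) * (((1 - α ^ 2) * x - (α * (β ^ 2 * a + γ) - d))
            * ((1 - α ^ 2) * x - (α * (β ^ 2 * a + γ) + d))) = 0 := by
          rw [h0, hsq]; ring
        exact (mul_eq_zero.mp this).resolve_left hk.ne'
      rcases mul_eq_zero.mp key with h' | h'
      · left; field_simp; linarith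
      · right; field_simp; linarith
    · have hmem : ∀ y : ℝ, 0 ≤ α * y + β * (β * a) + γ →
          (1 - α ^ 2) * y - (α * (β ^ 2 * a + γ) - d) = 0 ∨
          (1 - α ^ 2) * y - (α * (β ^ 2 * a + γ) + d) = 0 →
          Real.sqrt (y ^ 2 + (β * a) ^ 2) = α * y + β * (β * a) + γ := by
        intro y h1 h2
        have h0 := poly_id y
        have hprod : ((1 - α ^ 2) * y - (α * (β ^ 2 * a + γ) - d))
            * ((1 - α ^ 2) * y - (α * (β ^ 2 * a + γ) + d)) = 0 := by
          rcases h2 with h2 | h2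
          · rw [h2, zero_mul]
          · rw [h2, mul_zero]
        rw [hprod, mul_zero] at h0
        have hkk : ((1 : ℝ) - α ^ 2 - β ^ 2) * (1 - α ^ 2) ≠ 0 := (mul_pos hk h1a).ne'
        have heq : y ^ 2 + (β * a) ^ 2 = (α * y + β * (β * a) + γ) ^ 2 := by
          have := (mul_eq_zero.mp h0.symm).resolve_left hkk
          linarith
        rw [heq, Real.sqrt_sq h1]
      rintro (rfl | rfl)
      · apply hmem
        · have hv : α * ((α * (β ^ 2 * a + γ) - d) / (1 - α ^ 2)) + β * (β * a) + γ
              = ((β ^ 2 * a + γ) - α * d) / (1 - α ^ 2) := by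
            field_simp; ring
          rw [hv]
          exact div_nonneg (by linarith) h1a.le
        · left; field_simp; ring
      · apply hmem
        · have hv : α * ((α * (β ^ 2 * a + γ) + d) / (1 - α ^ 2)) + β * (β * a) + γ
              = ((β ^ 2 * a + γ) + α * d) / (1 - α ^ 2) := by
            field_simp; ring
          rw [hv]
          exact div_nonneg (by linarith) h1a.le
        · right; field_simp; ring
  · have hne1 : (1 : ℝ) + α ≠ 0 := by linarith
    have hne2 : (1 : ℝ) - α ≠ 0 := by linarith
    have hne3 : (1 : ℝ) - α ^ 2 ≠ 0 := h1a.ne'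
    have hprod : ((1:ℝ) - α ^ 2) * (1 - α ^ 2 - β ^ 2) ≠ 0 := (mul_pos h1a hk).ne'
    have L4 : ((α * (β ^ 2 * a + γ) + d) / (1 - α ^ 2)
        - (α * (β ^ 2 * a + γ) - d) / (1 - α ^ 2)) ^ 2
        = 4 * γ ^ 2 / ((1 - α ^ 2) * (1 - α ^ 2 - β ^ 2)) := by
      rw [div_sub_div_same,
        show α * (β ^ 2 * a + γ) + d - (α * (β ^ 2 * a + γ) - d) = 2 * d by ring,
        div_pow, div_eq_div_iff (pow_ne_zero 2 hne3) hprod]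
      linear_combination (4 * (1 - α ^ 2)) * hd2
    have R4 : (γ / (1 - α) - -γ / (1 + α)) * (2 * a)
        = 4 * γ ^ 2 / ((1 - α ^ 2) * (1 - α ^ 2 - β ^ 2)) := by
      rw [div_sub_div _ _ hne2 hne1, div_mul_eq_mul_div,
        div_eq_div_iff (mul_ne_zero hne2 hne1) hprod]
      linear_combination (4 * γ * (1 - α ^ 2)) * ha'
    rw [L4, R4]
end
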